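/- arXiv:2101.09794 — 8 statements merged into one kernel-verified Lean document; each statement's English description precedes it below -/
import Mathlib

section
/- For binary additive valuations on a path, every non-wasteful connected allocation is Pareto optimal among connected allocations. -/
open Finset

/-- A set of goods on a path (goods indexed by `Fin m`) is connected iff it is an interval. -/
def IsIvl {m : ℕ} (S : Finset (Fin m)) : Prop :=
  ∀ ⦃a b c : Fin m⦄, a ∈ S → c ∈ S → a ≤ b → b ≤ c → b ∈ S

/-- A connected allocation on a path: each agent gets an interval, intervals pairwise disjoint. -/
structure Alloc (n m : ℕ) where
  bundle : Fin n → Finset (Fin m)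
  connected : ∀ i, IsIvl (bundle i)
  disj : ∀ i k, i ≠ k → Disjoint (bundle i) (bundle k)

/-- Complete: every good is assigned. -/
def Alloc.Complete {n m : ℕ} (A : Alloc n m) : Prop :=
  ∀ v : Fin m, ∃ i, v ∈ A.bundle i

/-- Additive utility from per-good values. -/
def util {n m : ℕ} (val : Fin n → Fin m → ℕ) (i : Fin n) (S : Finset (Fin m)) : ℕ :=
  ∑ j ∈ S, val i j

/-- Non-wasteful: every good is assigned to an agent who values it at 1. -/
def NonWasteful {n m : ℕ} (val : Fin n → Fin m → ℕ) (A : Alloc n m) : Prop :=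
  ∀ v : Fin m, ∃ i, v ∈ A.bundle i ∧ val i v = 1

/-- Pareto optimal among connected allocations. -/
def ParetoOptimal {n m : ℕ} (val : Fin n → Fin m → ℕ) (A : Alloc n m) : Prop :=
  ¬ ∃ B : Alloc n m,
      (∀ i, util val i (A.bundle i) ≤ util val i (B.bundle i)) ∧
      (∃ i, util val i (A.bundle i) < util val i (B.bundle i))

/-- Equitability up to one good, for general (set-function) utilities. -/
def EQ1 {n m : ℕ} (u : Fin n → Finset (Fin m) → ℕ) (A : Alloc n m) : Prop :=
  ∀ i k, (A.bundle k).Nonempty →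
    ∃ v ∈ A.bundle k, u k (A.bundle k \ {v}) ≤ u i (A.bundle i)

/-- σ-consistency: bundles appear left to right along the path in the order σ. -/
def Consistent {n m : ℕ} (σ : Equiv.Perm (Fin n)) (A : Alloc n m) : Prop :=
  ∀ i k : Fin n, i < k → ∀ x ∈ A.bundle (σ i), ∀ y ∈ A.bundle (σ k), x < y

theorem stmt0 {n m : ℕ} (val : Fin n → Fin m → ℕ) (hbin : ∀ i j, val i j ≤ 1)
    (A : Alloc n m) (hNW : NonWasteful val A) : ParetoOptimal val A := by
  rintro ⟨B, hle, i₀, hlt⟩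
  -- choose for each good an agent who holds it and values it
  choose g hg hgv using hNW
  -- total utility under A is at least m
  have hA : m ≤ ∑ i, util val i (A.bundle i) := by
    calc m = (univ : Finset (Fin m)).card := by simp
    _ = ∑ i : Fin n, (univ.filter (fun j => g j = i)).card :=
        Finset.card_eq_sum_card_fiberwise (fun j _ => mem_univ (g j))
    _ ≤ ∑ i, util val i (A.bundle i) := by
        refine Finset.sum_le_sum fun i _ => ?_
        have hsub : univ.filter (fun j => g j = i) ⊆ A.bundle i := by
          intro j hj
          simp only [mem_filter] at hj
          exact hj.2 ▸ hg j
        calc (univ.filter (fun j => g j = i)).card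
            = ∑ j ∈ univ.filter (fun j => g j = i), val i j := by
              rw [Finset.card_eq_sum_ones]
              refine Finset.sum_congr rfl fun j hj => ?_
              simp only [mem_filter] at hj
              rw [← hj.2, hgv j]
        _ ≤ util val i (A.bundle i) :=
              Finset.sum_le_sum_of_subset hsub
  -- total utility under B is at most m
  have hB : ∑ i, util val i (B.bundle i) ≤ m := by
    calc ∑ i, util val i (B.bundle i) ≤ ∑ i, (B.bundle i).card := by
          refine Finset.sum_le_sum fun i _ => ?_
          calc util val i (B.bundle i) ≤ ∑ _j ∈ B.bundle i, 1 :=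
                Finset.sum_le_sum fun j _ => hbin i j
          _ = (B.bundle i).card := by simp
    _ = (univ.biUnion B.bundle).card :=
          (Finset.card_biUnion (fun i _ k _ hik => B.disj i k hik)).symm
    _ ≤ (univ : Finset (Fin m)).card := Finset.card_le_card (subset_univ _)
    _ = m := by simp
  have : ∑ i, util val i (A.bundle i) < ∑ i, util val i (B.bundle i) :=
    Finset.sum_lt_sum (fun i _ => hle i) ⟨i₀, mem_univ _, hlt⟩
  omega
end

section
/- For any instance with monotone valuations on a path and any fixed left-to-right ordering σ of the agents, there exists a connected, complete, σ-consistent allocation that is equitable up to one good (EQ1). -/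
open Finset

namespace EQ1Aux

def ivl (m p q : ℕ) : Finset (Fin m) :=
  Finset.univ.filter (fun v => p ≤ v.val ∧ v.val < q)

lemma mem_ivl {m p q : ℕ} {v : Fin m} : v ∈ ivl m p q ↔ p ≤ v.val ∧ v.val < q := by
  simp [ivl]

lemma ivl_isIvl (m p q : ℕ) : IsIvl (ivl m p q) := by
  intro a b c ha hc hab hbc
  rw [mem_ivl] at ha hc ⊢
  have h1 : (a : ℕ) ≤ b := hab
  have h2 : (b : ℕ) ≤ c := hbc
  omega

lemma ivl_subset {m : ℕ} {p q p' q' : ℕ} (h1 : p' ≤ p) (h2 : q ≤ q') :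
    ivl m p q ⊆ ivl m p' q' := by
  intro v hv
  rw [mem_ivl] at hv ⊢
  omega

lemma ivl_disjoint {m : ℕ} {p q p' q' : ℕ} (h : q ≤ p') :
    Disjoint (ivl m p q) (ivl m p' q') := by
  rw [Finset.disjoint_left]
  intro v hv hv'
  rw [mem_ivl] at hv hv'
  omega

lemma ivl_sdiff_right {m p q : ℕ} (v : Fin m) (hv : (v : ℕ) = q - 1) (hpq : p < q) :
    ivl m p q \ {v} = ivl m p (q - 1) := by
  ext x
  simp only [Finset.mem_sdiff, Finset.mem_singleton, mem_ivl, Fin.ext_iff, hv]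
  omega

lemma ivl_sdiff_left {m p q : ℕ} (v : Fin m) (hv : (v : ℕ) = p) :
    ivl m p q \ {v} = ivl m (p + 1) q := by
  ext x
  simp only [Finset.mem_sdiff, Finset.mem_singleton, mem_ivl, Fin.ext_iff, hv]
  omega

open Classical in
noncomputable def fwd (m lam : ℕ) (W : ℕ → ℕ → ℕ → ℕ) : ℕ → ℕ
  | 0 => 0
  | t + 1 =>
      if h : ∃ q, fwd m lam W t ≤ q ∧ q ≤ m ∧ lam ≤ W t (fwd m lam W t) q then Nat.find h
      else m

open Classical in
noncomputable def rev (n m lam : ℕ) (W : ℕ → ℕ → ℕ → ℕ) : ℕ → ℕ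
  | 0 => m
  | k + 1 => Nat.findGreatest (fun e => lam ≤ W (n - (k + 1)) e (rev n m lam W k))
      (rev n m lam W k)

open Classical in
lemma fwd_succ (m lam : ℕ) (W : ℕ → ℕ → ℕ → ℕ) (t : ℕ) :
    fwd m lam W (t + 1) =
      if h : ∃ q, fwd m lam W t ≤ q ∧ q ≤ m ∧ lam ≤ W t (fwd m lam W t) q then Nat.find h
      else m := by
  simp [fwd]

open Classical in
lemma rev_succ (n m lam : ℕ) (W : ℕ → ℕ → ℕ → ℕ) (k : ℕ) :
    rev n m lam W (k + 1) =
      Nat.findGreatest (fun e => lam ≤ W (n - (k + 1)) e (rev n m lam W k))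
        (rev n m lam W k) := by
  simp [rev]

lemma rev_le (n m lam : ℕ) (W : ℕ → ℕ → ℕ → ℕ) : ∀ k, rev n m lam W k ≤ m
  | 0 => le_rfl
  | k + 1 => by
      rw [rev_succ]
      exact le_trans (Nat.findGreatest_le _) (rev_le n m lam W k)

theorem key (n m : ℕ) (hn : 0 < n) (W : ℕ → ℕ → ℕ → ℕ)
    (hWmono : ∀ t p q p' q', p' ≤ p → q ≤ q' → W t p q ≤ W t p' q') :
    ∃ (g : ℕ → ℕ) (lam : ℕ),
      (∀ t, g t ≤ g (t + 1)) ∧ g 0 = 0 ∧ g n = m ∧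
      (∀ t, t < n → lam ≤ W t (g t) (g (t + 1))) ∧
      (∀ t, t < n → g t < g (t + 1) →
        W t (g t) (g (t + 1) - 1) ≤ lam ∨ W t (g t + 1) (g (t + 1)) ≤ lam) := by
  classical
  -- the feasibility predicate
  set fits : ℕ → Prop := fun lam => ∃ d : ℕ → ℕ,
      (∀ t, d t ≤ d (t + 1)) ∧ d 0 = 0 ∧ d n ≤ m ∧
      ∀ t, t < n → lam ≤ W t (d t) (d (t + 1)) with hfitsdef
  have hfits0 : fits 0 :=
    ⟨fun _ => 0, fun _ => le_rfl, rfl, Nat.zero_le _, fun _ _ => Nat.zero_le _⟩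
  have hbound : ∀ lam, fits lam → lam ≤ W 0 0 m := by
    rintro lam ⟨d, hstep, h0, hnm, hval⟩
    have hd : Monotone d := monotone_nat_of_le_succ hstep
    have h1 : d 1 ≤ m := le_trans (hd hn) hnm
    calc lam ≤ W 0 (d 0) (d 1) := hval 0 hn
      _ = W 0 0 (d 1) := by rw [h0]
      _ ≤ W 0 0 m := hWmono _ _ _ _ _ le_rfl h1
  set lam := Nat.findGreatest fits (W 0 0 m) with hlamdef
  have hfl : fits lam := Nat.findGreatest_spec (Nat.zero_le _) hfits0
  have hnfl : ¬ fits (lam + 1) := fun h =>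
    Nat.findGreatest_is_greatest (Nat.lt_succ_self lam) (hbound _ h) h
  -- reverse greedy at lam
  set f : ℕ → ℕ := fun t => rev n m lam W (n - t) with hfdef
  have hfn : f n = m := by
    have : n - n = 0 := by omega
    simp only [hfdef, this]
    rfl
  have hfle : ∀ t, f t ≤ m := fun t => rev_le n m lam W (n - t)
  have hfstep : ∀ t, t < n →
      f t = Nat.findGreatest (fun e => lam ≤ W t e (f (t + 1))) (f (t + 1)) := by
    intro t ht
    have h1 : n - t = (n - (t + 1)) + 1 := by omega
    have h2 : n - ((n - (t + 1)) + 1) = t := by omega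
    have h3 : f t = rev n m lam W ((n - (t + 1)) + 1) := by
      simp only [hfdef]; rw [h1]
    rw [h3, rev_succ, h2]
  have hfmono : ∀ t, f t ≤ f (t + 1) := by
    intro t
    by_cases ht : t < n
    · rw [hfstep t ht]; exact Nat.findGreatest_le _
    · have e1 : n - t = 0 := by omega
      have e2 : n - (t + 1) = 0 := by omega
      simp only [hfdef, e1, e2]
      exact le_rfl
  -- the witness d dominates below f
  obtain ⟨d, hdstep, hd0, hdn, hdval⟩ := hfl
  have hdf : ∀ k, k ≤ n → d (n - k) ≤ f (n - k) := by
    intro k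
    induction k with
    | zero =>
        intro _
        have : n - 0 = n := by omega
        rw [this, hfn]
        exact hdn
    | succ k ih =>
        intro hk
        have iht := ih (by omega)
        set t := n - (k + 1) with htdef
        have ht : t < n := by omega
        have heq : n - k = t + 1 := by omega
        rw [heq] at iht
        have hd1 : d t ≤ f (t + 1) := le_trans (hdstep t) iht
        have hcand : lam ≤ W t (d t) (f (t + 1)) :=
          le_trans (hdval t ht) (hWmono _ _ _ _ _ le_rfl iht)
        rw [hfstep t ht]
        exact Nat.le_findGreatest hd1 hcand
  have hfval : ∀ t, t < n → lam ≤ W t (f t) (f (t + 1)) := by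
    intro t ht
    have hd1 : d (t + 1) ≤ f (t + 1) := by
      have := hdf (n - (t + 1)) (by omega)
      rwa [show n - (n - (t + 1)) = t + 1 by omega] at this
    have hcand : lam ≤ W t (d t) (f (t + 1)) :=
      le_trans (hdval t ht) (hWmono _ _ _ _ _ le_rfl hd1)
    have hle : d t ≤ f (t + 1) := le_trans (hdstep t) hd1
    have := Nat.findGreatest_spec (P := fun e => lam ≤ W t e (f (t + 1))) hle hcand
    rwa [← hfstep t ht] at this
  -- forward greedy at lam + 1
  set c : ℕ → ℕ := fwd m (lam + 1) W with hcdef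
  have hc0 : c 0 = 0 := rfl
  have hcsucc : ∀ t, c (t + 1) =
      if h : ∃ q, c t ≤ q ∧ q ≤ m ∧ lam + 1 ≤ W t (c t) q then Nat.find h else m := by
    intro t
    simp only [hcdef]
    rw [fwd_succ]
  have hcle : ∀ t, c t ≤ m := by
    intro t
    induction t with
    | zero => rw [hc0]; exact Nat.zero_le _
    | succ t ih =>
        rw [hcsucc t]
        split
        · next h => exact (Nat.find_spec h).2.1
        · exact le_rfl
  have hcmono : ∀ t, c t ≤ c (t + 1) := by
    intro t
    rw [hcsucc t]
    split
    · next h => exact (Nat.find_spec h).1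
    · exact hcle t
  -- bad indices exist
  have hbad : ∃ t, t < n ∧
      (¬ (∃ q, c t ≤ q ∧ q ≤ m ∧ lam + 1 ≤ W t (c t) q) ∨ f (t + 1) < c (t + 1)) := by
    by_contra hno
    push_neg at hno
    apply hnfl
    refine ⟨c, hcmono, hc0, hcle n, ?_⟩
    intro t ht
    obtain ⟨hE, _⟩ := hno t ht
    have := (Nat.find_spec hE).2.2
    rw [hcsucc t, dif_pos hE]
    exact this
  set j := Nat.find hbad with hjdef
  have hj := Nat.find_spec hbad
  have hjn : j < n := hj.1
  have hprev : ∀ t, t < j →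
      (∃ q, c t ≤ q ∧ q ≤ m ∧ lam + 1 ≤ W t (c t) q) ∧ c (t + 1) ≤ f (t + 1) := by
    intro t ht
    have h1 := Nat.find_min hbad ht
    have htn : t < n := by omega
    push_neg at h1
    obtain ⟨h2, h3⟩ := h1 htn
    exact ⟨h2, h3⟩
  have hcfj : c j ≤ f j := by
    rcases Nat.eq_zero_or_pos j with h0 | hpos
    · rw [h0, hc0]; exact Nat.zero_le _
    · have h1 := (hprev (j - 1) (by omega)).2
      rwa [show j - 1 + 1 = j by omega] at h1
  -- the hybrid cut sequence
  set g : ℕ → ℕ := fun t => if t ≤ j then c t else f t with hgdef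
  have hg_of_le : ∀ t, t ≤ j → g t = c t := by
    intro t ht; simp only [hgdef, if_pos ht]
  have hg_of_gt : ∀ t, j < t → g t = f t := by
    intro t ht; simp only [hgdef, if_neg (by omega : ¬ t ≤ j)]
  refine ⟨g, lam, ?_, ?_, ?_, ?_, ?_⟩
  · -- monotone step
    intro t
    by_cases h1 : t + 1 ≤ j
    · rw [hg_of_le t (by omega), hg_of_le (t + 1) h1]; exact hcmono t
    · by_cases h2 : t ≤ j
      · have : t = j := by omega
        rw [hg_of_le t h2, hg_of_gt (t + 1) (by omega), this]
        exact le_trans hcfj (hfmono j)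
      · rw [hg_of_gt t (by omega), hg_of_gt (t + 1) (by omega)]
        exact hfmono t
  · rw [hg_of_le 0 (Nat.zero_le _)]; exact hc0
  · rw [hg_of_gt n hjn]; exact hfn
  · -- values at least lam
    intro t ht
    by_cases h1 : t + 1 ≤ j
    · rw [hg_of_le t (by omega), hg_of_le (t + 1) h1]
      have hE := (hprev t (by omega)).1
      have := (Nat.find_spec hE).2.2
      rw [hcsucc t, dif_pos hE]
      omega
    · by_cases h2 : t ≤ j
      · have htj : t = j := by omega
        rw [hg_of_le t h2, hg_of_gt (t + 1) (by omega), htj]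
        calc lam ≤ W j (f j) (f (j + 1)) := hfval j hjn
          _ ≤ W j (c j) (f (j + 1)) := hWmono _ _ _ _ _ hcfj le_rfl
      · rw [hg_of_gt t (by omega), hg_of_gt (t + 1) (by omega)]
        exact hfval t ht
  · -- removals
    intro t ht hlt
    by_cases h1 : t + 1 ≤ j
    · -- forward region : remove rightmost
      left
      rw [hg_of_le t (by omega), hg_of_le (t + 1) h1] at hlt ⊢
      have hE := (hprev t (by omega)).1
      have hfind : c (t + 1) = Nat.find hE := by rw [hcsucc t, dif_pos hE]
      have hmin := Nat.find_min hE (m := c (t + 1) - 1) (by omega)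
      push_neg at hmin
      have h3 := hmin (by omega) (by have := hcle (t + 1); omega)
      omega
    · by_cases h2 : t ≤ j
      · -- pivot agent : whole bundle value ≤ lam, remove rightmost
        left
        have htj : t = j := by omega
        rw [htj] at hlt ⊢
        rw [hg_of_le j le_rfl, hg_of_gt (j + 1) (by omega)] at hlt ⊢
        have hwhole : W j (c j) (f (j + 1)) ≤ lam := by
          by_cases hE : ∃ q, c j ≤ q ∧ q ≤ m ∧ lam + 1 ≤ W j (c j) q
          · have hflt : f (j + 1) < c (j + 1) := by
              rcases hj.2 with h | h
              · exact absurd hE h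
              · exact h
            have hfind : c (j + 1) = Nat.find hE := by rw [hcsucc j, dif_pos hE]
            have hmin := Nat.find_min hE (m := f (j + 1)) (by omega)
            push_neg at hmin
            have hcf : c j ≤ f (j + 1) := le_trans hcfj (hfmono j)
            have := hmin hcf (hfle (j + 1))
            omega
          · push_neg at hE
            have hcf : c j ≤ f (j + 1) := le_trans hcfj (hfmono j)
            have := hE (f (j + 1)) hcf (hfle (j + 1))
            omega
        exact le_trans (hWmono _ _ _ _ _ le_rfl (by omega)) hwhole
      · -- reverse region : remove leftmost
        right
        rw [hg_of_gt t (by omega), hg_of_gt (t + 1) (by omega)] at hlt ⊢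
        have hgr := Nat.findGreatest_is_greatest
          (P := fun e => lam ≤ W t e (f (t + 1))) (n := f (t + 1)) (k := f t + 1)
          (by rw [← hfstep t ht]; omega) (by omega)
        simp only [not_le] at hgr
        omega


end EQ1Aux

theorem stmt3 {n m : ℕ} (hn : 0 < n) (u : Fin n → Finset (Fin m) → ℕ)
    (hmono : ∀ i S S', IsIvl S → IsIvl S' → S ⊆ S' → u i S ≤ u i S')
    (hempty : ∀ i, u i ∅ = 0) (σ : Equiv.Perm (Fin n)) :
    ∃ A : Alloc n m, A.Complete ∧ Consistent σ A ∧ EQ1 u A := by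
  classical
  set W : ℕ → ℕ → ℕ → ℕ :=
    fun t p q => if h : t < n then u (σ ⟨t, h⟩) (EQ1Aux.ivl m p q) else 0 with hWdef
  have hWmono : ∀ t p q p' q', p' ≤ p → q ≤ q' → W t p q ≤ W t p' q' := by
    intro t p q p' q' h1 h2
    by_cases ht : t < n
    · simp only [hWdef, dif_pos ht]
      exact hmono _ _ _ (EQ1Aux.ivl_isIvl m p q) (EQ1Aux.ivl_isIvl m p' q')
        (EQ1Aux.ivl_subset h1 h2)
    · simp only [hWdef, dif_neg ht]
      exact le_rfl
  obtain ⟨g, lam, gstep, g0, gn, gval, grem⟩ := EQ1Aux.key n m hn W hWmono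
  have gmono : Monotone g := monotone_nat_of_le_succ gstep
  have gle : ∀ t, t ≤ n → g t ≤ m := by
    intro t ht
    calc g t ≤ g n := gmono ht
      _ = m := gn
  have hWapp : ∀ (k : Fin n) (p q : ℕ),
      u k (EQ1Aux.ivl m p q) = W ((σ.symm k : Fin n) : ℕ) p q := by
    intro k p q
    simp only [hWdef, dif_pos (σ.symm k).isLt]
    congr 1
    rw [Fin.eta, Equiv.apply_symm_apply]
  refine ⟨⟨fun a => EQ1Aux.ivl m (g ((σ.symm a : Fin n) : ℕ)) (g (((σ.symm a : Fin n) : ℕ) + 1)),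
      fun a => EQ1Aux.ivl_isIvl _ _ _, ?_⟩, ?_, ?_, ?_⟩
  · -- disjointness
    intro i k hik
    have hne : ((σ.symm i : Fin n) : ℕ) ≠ ((σ.symm k : Fin n) : ℕ) := by
      intro h
      apply hik
      have h2 : σ.symm i = σ.symm k := Fin.ext h
      have := congrArg σ h2
      simpa using this
    rcases lt_or_gt_of_ne hne with h | h
    · exact EQ1Aux.ivl_disjoint (gmono (show ((σ.symm i : Fin n) : ℕ) + 1 ≤ _ from h))
    · exact (EQ1Aux.ivl_disjoint (gmono (show ((σ.symm k : Fin n) : ℕ) + 1 ≤ _ from h))).symm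
  · -- complete
    intro v
    have hex : ∃ t, (v : ℕ) < g (t + 1) := by
      refine ⟨n - 1, ?_⟩
      rw [show n - 1 + 1 = n by omega, gn]
      exact v.isLt
    set t0 := Nat.find hex with ht0def
    have hv2 : (v : ℕ) < g (t0 + 1) := Nat.find_spec hex
    have ht0n : t0 < n := by
      have h1 : t0 ≤ n - 1 := Nat.find_le (by
        rw [show n - 1 + 1 = n by omega, gn]; exact v.isLt)
      omega
    have hv1 : g t0 ≤ (v : ℕ) := by
      rcases Nat.eq_zero_or_pos t0 with h0 | hpos
      · rw [h0, g0]; exact Nat.zero_le _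
      · have h1 := Nat.find_min hex (m := t0 - 1) (by omega)
        push_neg at h1
        rwa [show t0 - 1 + 1 = t0 by omega] at h1
    refine ⟨σ ⟨t0, ht0n⟩, ?_⟩
    simp only [Equiv.symm_apply_apply]
    rw [EQ1Aux.mem_ivl]
    exact ⟨hv1, hv2⟩
  · -- consistent
    intro i k hik x hx y hy
    simp only [Equiv.symm_apply_apply] at hx hy
    rw [EQ1Aux.mem_ivl] at hx hy
    have hik' : (i : ℕ) + 1 ≤ (k : ℕ) := hik
    have : (x : ℕ) < (y : ℕ) :=
      lt_of_lt_of_le hx.2 (le_trans (gmono hik') hy.1)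
    exact this
  · -- EQ1
    intro i k hk
    set t := ((σ.symm k : Fin n) : ℕ) with htdef
    have htn : t < n := (σ.symm k).isLt
    obtain ⟨w, hw⟩ := hk
    rw [EQ1Aux.mem_ivl] at hw
    have hlt : g t < g (t + 1) := lt_of_le_of_lt hw.1 hw.2
    have hgm : g (t + 1) ≤ m := gle (t + 1) (by omega)
    have hub : lam ≤ u i (EQ1Aux.ivl m (g ((σ.symm i : Fin n) : ℕ))
        (g (((σ.symm i : Fin n) : ℕ) + 1))) := by
      rw [hWapp]
      exact gval _ (σ.symm i).isLt
    rcases grem t htn hlt with hrem | hrem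
    · -- remove rightmost good
      have hvm : g (t + 1) - 1 < m := by omega
      refine ⟨⟨g (t + 1) - 1, hvm⟩, ?_, ?_⟩
      · rw [EQ1Aux.mem_ivl]
        refine ⟨?_, ?_⟩
        · show g t ≤ g (t + 1) - 1
          omega
        · show g (t + 1) - 1 < g (t + 1)
          omega
      · dsimp only
        rw [EQ1Aux.ivl_sdiff_right _ rfl hlt, hWapp k]
        exact le_trans hrem hub
    · -- remove leftmost good
      have hvm : g t < m := by omega
      refine ⟨⟨g t, hvm⟩, ?_, ?_⟩
      · rw [EQ1Aux.mem_ivl]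
        exact ⟨le_rfl, hlt⟩
      · dsimp only
        have heq := EQ1Aux.ivl_sdiff_left (m := m)
          (p := g ((σ.symm k : Fin n) : ℕ)) (q := g (((σ.symm k : Fin n) : ℕ) + 1))
          (⟨g t, hvm⟩ : Fin m) rfl
        rw [heq, hWapp k]
        exact le_trans hrem hub
end

section
/- For any instance with monotone valuations on a path and any fixed ordering σ of agents, there exists a connected, complete, σ-consistent, EQ1 allocation whose egalitarian welfare equals the maximum egalitarian welfare over all connected σ-consistent allocations. -/
open Finset

namespace Stmt4Aux


variable {n m : ℕ}

/-- The interval of goods `[x, y)` as a finset of `Fin m`. -/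
def ivl (m x y : ℕ) : Finset (Fin m) := univ.filter (fun v => x ≤ v.1 ∧ v.1 < y)

lemma mem_ivl {m x y : ℕ} {v : Fin m} : v ∈ ivl m x y ↔ x ≤ v.1 ∧ v.1 < y := by
  simp [ivl]

lemma isIvl_ivl {m x y : ℕ} : IsIvl (ivl m x y) := by
  intro a b c ha hc hab hbc
  rw [mem_ivl] at *
  rcases ha with ⟨ha1, _⟩
  rcases hc with ⟨_, hc2⟩
  exact ⟨le_trans ha1 hab, lt_of_le_of_lt hbc hc2⟩

lemma ivl_subset {m x x' y y' : ℕ} (h1 : x' ≤ x) (h2 : y ≤ y') :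
    ivl m x y ⊆ ivl m x' y' := by
  intro v hv
  rw [mem_ivl] at *
  omega

lemma ivl_sdiff_right {m x y : ℕ} (h1 : x < y) (hym : y - 1 < m) :
    ivl m x y \ {(⟨y - 1, hym⟩ : Fin m)} = ivl m x (y - 1) := by
  ext v
  simp only [Finset.mem_sdiff, Finset.mem_singleton, mem_ivl, Fin.ext_iff]
  omega

lemma ivl_sdiff_left {m x y : ℕ} (hxm : x < m) :
    ivl m x y \ {(⟨x, hxm⟩ : Fin m)} = ivl m (x + 1) y := by
  ext v
  simp only [Finset.mem_sdiff, Finset.mem_singleton, mem_ivl, Fin.ext_iff]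
  omega

def Chain (c : ℕ → ℕ) (k : ℕ) : Prop := ∀ i, i < k → c i ≤ c (i+1)

lemma chain_le {c : ℕ → ℕ} {k : ℕ} (hc : Chain c k) :
    ∀ i j, i ≤ j → j ≤ k → c i ≤ c j := by
  intro i j hij hjk
  induction j with
  | zero => have : i = 0 := by omega
            simp [this]
  | succ j ih =>
    rcases Nat.eq_or_lt_of_le hij with h | h
    · simp [h]
    · exact le_trans (ih (by omega) (by omega)) (hc j (by omega))

def Feas (V : ℕ → ℕ → ℕ → ℕ) (k a b lam : ℕ) : Prop :=
  ∃ c : ℕ → ℕ, c 0 = a ∧ c k = b ∧ Chain c k ∧ ∀ i, i < k → lam ≤ V i (c i) (c (i+1))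

variable {V : ℕ → ℕ → ℕ → ℕ}

lemma greedy_left (Vmono : ∀ j x x' y y', x' ≤ x → y ≤ y' → V j x y ≤ V j x' y') :
    ∀ k a b lam, Feas V k a b lam → (∀ b', b' < b → ¬ Feas V k a b' lam) →
    ∃ c : ℕ → ℕ, c 0 = a ∧ c k = b ∧ Chain c k ∧
      ∀ i, i < k → lam ≤ V i (c i) (c (i+1)) ∧
        (c i < c (i+1) → V i (c i) (c (i+1) - 1) < lam) := by
  intro k
  induction k with
  | zero =>
    intro a b lam hf _
    obtain ⟨d, hd0, hdk, _, _⟩ := hf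
    exact ⟨fun _ => a, rfl, by rw [← hdk, hd0], fun i hi => by omega,
      fun i hi => absurd hi (by omega)⟩
  | succ k ih =>
    intro a b lam hf hb
    obtain ⟨d, hd0, hdk, hdch, hdval⟩ := hf
    classical
    have hPdk : Feas V k a (d k) lam :=
      ⟨d, hd0, rfl, fun i hi => hdch i (by omega), fun i hi => hdval i (by omega)⟩
    have hex : ∃ s, Feas V k a s lam := ⟨d k, hPdk⟩
    have htP : Feas V k a (Nat.find hex) lam := Nat.find_spec hex
    set t := Nat.find hex with ht
    have htle : t ≤ d k := Nat.find_le hPdk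
    have htmin : ∀ s, s < t → ¬ Feas V k a s lam := fun s hs => Nat.find_min hex hs
    obtain ⟨c', hc0, hck, hcch, hcval⟩ := ih a t lam htP htmin
    have htb : t ≤ b := le_trans htle (by rw [← hdk]; exact hdch k (by omega))
    refine ⟨fun i => if i ≤ k then c' i else b, by simp [hc0], by simp, ?_, ?_⟩
    · intro i hi
      by_cases h1 : i < k
      · simp only [if_pos (by omega : i ≤ k), if_pos (by omega : i + 1 ≤ k)]
        exact hcch i h1
      · have hik : i = k := by omega
        rw [hik]
        simp only [if_pos (le_refl k), if_neg (by omega : ¬ k + 1 ≤ k), hck]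
        exact htb
    · intro i hi
      by_cases h1 : i < k
      · simp only [if_pos (by omega : i ≤ k), if_pos (by omega : i + 1 ≤ k)]
        exact hcval i h1
      · have hik : i = k := by omega
        subst hik
        simp only [if_pos (le_refl i), if_neg (by omega : ¬ i + 1 ≤ i), hck]
        constructor
        · calc lam ≤ V i (d i) (d (i+1)) := hdval i (by omega)
            _ = V i (d i) b := by rw [hdk]
            _ ≤ V i t b := Vmono i (d i) t b b htle (le_refl b)
        · intro hlt
          by_contra h'
          push_neg at h'
          have hfeas : Feas V (i+1) a (b-1) lam := by
            refine ⟨fun j => if j ≤ i then c' j else b - 1, by simp [hc0], by simp, ?_, ?_⟩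
            · intro j hj
              by_cases h2 : j < i
              · simp only [if_pos (by omega : j ≤ i), if_pos (by omega : j + 1 ≤ i)]
                exact hcch j h2
              · have hji : j = i := by omega
                rw [hji]
                simp only [if_pos (le_refl i), if_neg (by omega : ¬ i + 1 ≤ i), hck]
                omega
            · intro j hj
              by_cases h2 : j < i
              · simp only [if_pos (by omega : j ≤ i), if_pos (by omega : j + 1 ≤ i)]
                exact (hcval j h2).1
              · have hji : j = i := by omega
                rw [hji]
                simp only [if_pos (le_refl i), if_neg (by omega : ¬ i + 1 ≤ i), hck]
                exact h'
          exact hb (b-1) (by omega) hfeas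

lemma main_alloc (Vmono : ∀ j x x' y y', x' ≤ x → y ≤ y' → V j x y ≤ V j x' y') :
    ∀ k a b lam, 1 ≤ k → Feas V k a b lam → ¬ Feas V k a b (lam+1) →
    ∃ c : ℕ → ℕ, c 0 = a ∧ c k = b ∧ Chain c k ∧
      ∀ i, i < k → lam ≤ V i (c i) (c (i+1)) ∧
        (c i < c (i+1) → V i (c i) (c (i+1) - 1) ≤ lam ∨ V i (c i + 1) (c (i+1)) ≤ lam) := by
  intro k
  induction k with
  | zero => intro a b lam h1; omega
  | succ k ih =>
    intro a b lam _ hf hglob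
    classical
    obtain ⟨d, hd0, hdk, hdch, hdval⟩ := hf
    by_cases hk0 : k = 0
    · -- base case: one agent
      subst hk0
      have hub : V 0 a b ≤ lam := by
        by_contra h'
        push_neg at h'
        exact hglob ⟨d, hd0, hdk, hdch, fun i hi => by
          have : i = 0 := by omega
          subst this
          rw [hd0, hdk]
          omega⟩
      refine ⟨fun i => if i = 0 then a else b, by simp, by simp, ?_, ?_⟩
      · intro i hi
        have : i = 0 := by omega
        subst this
        simp only [if_pos rfl, if_neg (by omega : ¬ (0:ℕ) + 1 = 0)]
        rw [← hd0, ← hdk]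
        exact hdch 0 (by omega)
      · intro i hi
        have : i = 0 := by omega
        subst this
        simp only [if_pos rfl, if_neg (by omega : ¬ (0:ℕ) + 1 = 0)]
        constructor
        · have := hdval 0 (by omega)
          rw [hd0, hdk] at this
          exact this
        · intro _
          exact Or.inl (le_trans (Vmono 0 a a (b-1) b le_rfl (by omega)) hub)
    · -- inductive step, k ≥ 1
      have hk1 : 1 ≤ k := by omega
      have hdkb : d k ≤ b := by rw [← hdk]; exact hdch k (by omega)
      have hPdk : lam ≤ V k (d k) b := by
        have := hdval k (by omega)
        rwa [hdk] at this
      set r := Nat.findGreatest (fun s => lam ≤ V k s b) b with hrdef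
      have hr : lam ≤ V k r b :=
        Nat.findGreatest_spec (P := fun s => lam ≤ V k s b) hdkb hPdk
      have hrge : d k ≤ r :=
        Nat.le_findGreatest (P := fun s => lam ≤ V k s b) hdkb hPdk
      have hrle : r ≤ b := Nat.findGreatest_le b
      have hrmax : ∀ s, r < s → s ≤ b → V k s b < lam := by
        intro s hs hsb
        have := Nat.findGreatest_is_greatest (P := fun s => lam ≤ V k s b) hs hsb
        omega
      have hFeasSub : Feas V k a r lam := by
        refine ⟨fun i => if i = k then r else d i,
          by show (if (0:ℕ) = k then r else d 0) = a
             rw [if_neg (by omega : ¬ (0:ℕ) = k)]; exact hd0, by simp, ?_, ?_⟩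
        · intro i hi
          simp only [if_neg (by omega : ¬ i = k)]
          by_cases h2 : i + 1 = k
          · simp only [if_pos h2]
            calc d i ≤ d (i+1) := hdch i (by omega)
              _ = d k := by rw [h2]
              _ ≤ r := hrge
          · simp only [if_neg h2]
            exact hdch i (by omega)
        · intro i hi
          simp only [if_neg (by omega : ¬ i = k)]
          by_cases h2 : i + 1 = k
          · simp only [if_pos h2]
            calc lam ≤ V i (d i) (d (i+1)) := hdval i (by omega)
              _ ≤ V i (d i) r := Vmono i (d i) (d i) (d (i+1)) r le_rfl (by rw [h2]; exact hrge)
          · simp only [if_neg h2]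
            exact hdval i (by omega)
      by_cases hB : Feas V k a r (lam+1)
      · -- Case B
        have hex : ∃ s, Feas V k a s (lam+1) := ⟨r, hB⟩
        have ht1 : Feas V k a (Nat.find hex) (lam+1) := Nat.find_spec hex
        set t1 := Nat.find hex with ht1def
        have ht1le : t1 ≤ r := Nat.find_le hB
        have ht1min : ∀ s, s < t1 → ¬ Feas V k a s (lam+1) := fun s hs => Nat.find_min hex hs
        have hVlb : lam ≤ V k t1 b := le_trans hr (Vmono k r t1 b b ht1le le_rfl)
        have hVub : V k t1 b ≤ lam := by
          by_contra h'
          push_neg at h'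
          obtain ⟨c'', he0, hek, hech, heval⟩ := ht1
          refine hglob ⟨fun i => if i ≤ k then c'' i else b, by simp [he0], by simp, ?_, ?_⟩
          · intro i hi
            by_cases h2 : i < k
            · simp only [if_pos (by omega : i ≤ k), if_pos (by omega : i + 1 ≤ k)]
              exact hech i h2
            · have hik : i = k := by omega
              rw [hik]
              simp only [if_pos (le_refl k), if_neg (by omega : ¬ k + 1 ≤ k), hek]
              omega
          · intro i hi
            by_cases h2 : i < k
            · simp only [if_pos (by omega : i ≤ k), if_pos (by omega : i + 1 ≤ k)]
              exact heval i h2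
            · have hik : i = k := by omega
              rw [hik]
              simp only [if_pos (le_refl k), if_neg (by omega : ¬ k + 1 ≤ k), hek]
              omega
        obtain ⟨c', hc0, hck, hcch, hcval⟩ := greedy_left Vmono k a t1 (lam+1) ht1 ht1min
        refine ⟨fun i => if i ≤ k then c' i else b, by simp [hc0], by simp, ?_, ?_⟩
        · intro i hi
          by_cases h2 : i < k
          · simp only [if_pos (by omega : i ≤ k), if_pos (by omega : i + 1 ≤ k)]
            exact hcch i h2
          · have hik : i = k := by omega
            rw [hik]
            simp only [if_pos (le_refl k), if_neg (by omega : ¬ k + 1 ≤ k), hck]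
            omega
        · intro i hi
          by_cases h2 : i < k
          · simp only [if_pos (by omega : i ≤ k), if_pos (by omega : i + 1 ≤ k)]
            refine ⟨le_trans (by omega) (hcval i h2).1, fun hlt => Or.inl ?_⟩
            have := (hcval i h2).2 hlt
            omega
          · have hik : i = k := by omega
            rw [hik]
            simp only [if_pos (le_refl k), if_neg (by omega : ¬ k + 1 ≤ k), hck]
            refine ⟨hVlb, fun _ => Or.inl ?_⟩
            exact le_trans (Vmono k t1 t1 (b-1) b le_rfl (by omega)) hVub
      · -- Case A
        obtain ⟨c', hc0, hck, hcch, hcval⟩ := ih a r lam hk1 hFeasSub hB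
        refine ⟨fun i => if i ≤ k then c' i else b, by simp [hc0], by simp, ?_, ?_⟩
        · intro i hi
          by_cases h2 : i < k
          · simp only [if_pos (by omega : i ≤ k), if_pos (by omega : i + 1 ≤ k)]
            exact hcch i h2
          · have hik : i = k := by omega
            rw [hik]
            simp only [if_pos (le_refl k), if_neg (by omega : ¬ k + 1 ≤ k), hck]
            exact hrle
        · intro i hi
          by_cases h2 : i < k
          · simp only [if_pos (by omega : i ≤ k), if_pos (by omega : i + 1 ≤ k)]
            exact hcval i h2
          · have hik : i = k := by omega
            rw [hik]
            simp only [if_pos (le_refl k), if_neg (by omega : ¬ k + 1 ≤ k), hck]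
            refine ⟨hr, fun hlt => Or.inr ?_⟩
            have := hrmax (r+1) (by omega) (by omega)
            omega

end Stmt4Aux

open Stmt4Aux in
theorem stmt4 {n m : ℕ} (hn : 0 < n) (u : Fin n → Finset (Fin m) → ℕ)
    (hmono : ∀ i S S', IsIvl S → IsIvl S' → S ⊆ S' → u i S ≤ u i S')
    (hempty : ∀ i, u i ∅ = 0) (σ : Equiv.Perm (Fin n)) :
    ∃ A : Alloc n m, A.Complete ∧ Consistent σ A ∧ EQ1 u A ∧
      ∀ B : Alloc n m, Consistent σ B →
        Finset.univ.inf' ⟨⟨0, hn⟩, Finset.mem_univ _⟩ (fun i => u i (B.bundle i)) ≤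
          Finset.univ.inf' ⟨⟨0, hn⟩, Finset.mem_univ _⟩ (fun i => u i (A.bundle i)) := by
  classical
  set V : ℕ → ℕ → ℕ → ℕ :=
    fun j x y => if h : j < n then u (σ ⟨j, h⟩) (Stmt4Aux.ivl m x y) else 0 with hV
  have Vmono : ∀ j x x' y y', x' ≤ x → y ≤ y' → V j x y ≤ V j x' y' := by
    intro j x x' y y' h1 h2
    by_cases h : j < n
    · simp only [hV, dif_pos h]
      exact hmono _ _ _ Stmt4Aux.isIvl_ivl Stmt4Aux.isIvl_ivl (Stmt4Aux.ivl_subset h1 h2)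
    · simp [hV, dif_neg h]
  have feas0 : Stmt4Aux.Feas V n 0 m 0 := by
    refine ⟨fun i => if i = 0 then 0 else m, by simp, ?_, ?_, ?_⟩
    · show (if n = 0 then 0 else m) = m
      rw [if_neg (by omega)]
    · intro i hi
      dsimp only
      split <;> split <;> omega
    · intro i hi
      exact Nat.zero_le _
  have hbound : ∀ lam, Stmt4Aux.Feas V n 0 m lam → lam ≤ V 0 0 m := by
    rintro lam ⟨c, hc0, hcn, hcch, hcval⟩
    calc lam ≤ V 0 (c 0) (c 1) := hcval 0 hn
      _ ≤ V 0 0 m := by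
          refine Vmono 0 (c 0) 0 (c 1) m (by omega) ?_
          rw [← hcn]
          exact Stmt4Aux.chain_le hcch 1 n hn le_rfl
  set OPT := Nat.findGreatest (fun lam => Stmt4Aux.Feas V n 0 m lam) (V 0 0 m) with hOPTdef
  have hOPT : Stmt4Aux.Feas V n 0 m OPT :=
    Nat.findGreatest_spec (P := fun lam => Stmt4Aux.Feas V n 0 m lam) (Nat.zero_le _) feas0
  have hOPTmax : ¬ Stmt4Aux.Feas V n 0 m (OPT + 1) := by
    intro hcon
    exact Nat.findGreatest_is_greatest (P := fun lam => Stmt4Aux.Feas V n 0 m lam)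
      (by omega) (hbound _ hcon) hcon
  obtain ⟨c, hc0, hcn, hcch, hcval⟩ := Stmt4Aux.main_alloc Vmono n 0 m OPT hn hOPT hOPTmax
  have hcm : ∀ j, j ≤ n → c j ≤ m := by
    intro j hj
    rw [← hcn]
    exact Stmt4Aux.chain_le hcch j n hj le_rfl
  -- the allocation
  have key : ∀ (j j' : ℕ), j < j' → j' < n → ∀ x : Fin m,
      x ∈ Stmt4Aux.ivl m (c j) (c (j+1)) → ∀ y : Fin m,
      y ∈ Stmt4Aux.ivl m (c j') (c (j'+1)) → (x : ℕ) < y := by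
    intro j j' hjj hj'n x hx y hy
    rw [Stmt4Aux.mem_ivl] at hx hy
    have : c (j+1) ≤ c j' := Stmt4Aux.chain_le hcch (j+1) j' (by omega) (by omega)
    omega
  have hVval : ∀ (j : ℕ) (h : j < n) (x y : ℕ),
      V j x y = u (σ ⟨j, h⟩) (Stmt4Aux.ivl m x y) := by
    intro j h x y
    simp only [hV, dif_pos h]
  have hsig : ∀ (i' : Fin n) (h : ((σ.symm i' : Fin n) : ℕ) < n),
      σ ⟨((σ.symm i' : Fin n) : ℕ), h⟩ = i' := by
    intro i' h
    simp
  have hAi : ∀ i' : Fin n, OPT ≤ u i'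
      (Stmt4Aux.ivl m (c ((σ.symm i' : Fin n) : ℕ)) (c (((σ.symm i' : Fin n) : ℕ) + 1))) := by
    intro i'
    have h2 : ((σ.symm i' : Fin n) : ℕ) < n := (σ.symm i').2
    have h3 := (hcval _ h2).1
    rw [hVval _ h2, hsig i' h2] at h3
    exact h3
  refine ⟨⟨fun i => Stmt4Aux.ivl m (c ((σ.symm i : Fin n) : ℕ)) (c (((σ.symm i : Fin n) : ℕ) + 1)),
      fun i => Stmt4Aux.isIvl_ivl, ?_⟩, ?_, ?_, ?_, ?_⟩
  · -- disjointness
    intro i k hik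
    rw [Finset.disjoint_left]
    intro x hx hx'
    have hne : ((σ.symm i : Fin n) : ℕ) ≠ ((σ.symm k : Fin n) : ℕ) := by
      intro h
      exact hik (by
        have := Fin.ext h (a := σ.symm i) (b := σ.symm k)
        calc i = σ (σ.symm i) := (σ.apply_symm_apply i).symm
          _ = σ (σ.symm k) := by rw [this]
          _ = k := σ.apply_symm_apply k)
    rcases lt_or_gt_of_ne hne with h | h
    · exact absurd (key _ _ h (σ.symm k).2 x hx x hx') (lt_irrefl _)
    · exact absurd (key _ _ h (σ.symm i).2 x hx' x hx) (lt_irrefl _)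
  · -- complete
    intro v
    have hP0 : c 0 ≤ (v : ℕ) := by rw [hc0]; exact Nat.zero_le _
    set j := Nat.findGreatest (fun j => c j ≤ (v : ℕ)) n with hjdef
    have hj : c j ≤ (v : ℕ) :=
      Nat.findGreatest_spec (P := fun j => c j ≤ (v : ℕ)) (Nat.zero_le n) hP0
    have hjle : j ≤ n := Nat.findGreatest_le n
    have hjn : j < n := by
      rcases Nat.lt_or_ge j n with h | h
      · exact h
      · exfalso
        have hje : j = n := by omega
        rw [hje, hcn] at hj
        have := v.2
        omega
    have hj2 : (v : ℕ) < c (j + 1) := by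
      have := Nat.findGreatest_is_greatest (P := fun j => c j ≤ (v : ℕ))
        (by omega : j < j + 1) (by omega : j + 1 ≤ n)
      omega
    refine ⟨σ ⟨j, hjn⟩, ?_⟩
    show v ∈ Stmt4Aux.ivl m (c ((σ.symm (σ ⟨j, hjn⟩) : Fin n) : ℕ)) _
    rw [σ.symm_apply_apply]
    exact Stmt4Aux.mem_ivl.mpr ⟨hj, hj2⟩
  · -- consistent
    intro i k hik x hx y hy
    have hx' : x ∈ Stmt4Aux.ivl m (c ((σ.symm (σ i) : Fin n) : ℕ))
        (c (((σ.symm (σ i) : Fin n) : ℕ) + 1)) := hx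
    have hy' : y ∈ Stmt4Aux.ivl m (c ((σ.symm (σ k) : Fin n) : ℕ))
        (c (((σ.symm (σ k) : Fin n) : ℕ) + 1)) := hy
    rw [σ.symm_apply_apply] at hx' hy'
    exact key (i : ℕ) (k : ℕ) hik k.2 x hx' y hy' 
  · -- EQ1
    intro i k hk
    obtain ⟨w, hw⟩ := hk
    have hjk : ((σ.symm k : Fin n) : ℕ) < n := (σ.symm k).2
    set jk := ((σ.symm k : Fin n) : ℕ) with hjkdef
    have hsk : σ ⟨jk, hjk⟩ = k := hsig k hjk
    have hw' : c jk ≤ (w : ℕ) ∧ (w : ℕ) < c (jk + 1) := Stmt4Aux.mem_ivl.mp hw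
    have hwm : (w : ℕ) < m := w.2
    have hlt : c jk < c (jk + 1) := by omega
    have hub : c (jk + 1) ≤ m := hcm _ (by omega)
    rcases (hcval jk hjk).2 hlt with hrem | hrem
    · -- remove rightmost good
      have hym : c (jk + 1) - 1 < m := by omega
      refine ⟨⟨c (jk + 1) - 1, hym⟩, Stmt4Aux.mem_ivl.mpr
        ⟨by show c jk ≤ c (jk + 1) - 1; omega, by show c (jk + 1) - 1 < c (jk + 1); omega⟩, ?_⟩
      have hdiff : Stmt4Aux.ivl m (c jk) (c (jk + 1)) \ {(⟨c (jk + 1) - 1, hym⟩ : Fin m)} =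
          Stmt4Aux.ivl m (c jk) (c (jk + 1) - 1) := Stmt4Aux.ivl_sdiff_right hlt hym
      show u k (Stmt4Aux.ivl m (c jk) (c (jk + 1)) \ _) ≤ _
      rw [hdiff]
      have hle : u k (Stmt4Aux.ivl m (c jk) (c (jk + 1) - 1)) ≤ OPT := by
        rw [← hsk, ← hVval jk hjk]
        exact hrem
      exact le_trans hle (hAi i)
    · -- remove leftmost good
      have hxm : c jk < m := by omega
      refine ⟨⟨c jk, hxm⟩, Stmt4Aux.mem_ivl.mpr
        ⟨by show c jk ≤ c jk; omega, by show c jk < c (jk + 1); omega⟩, ?_⟩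
      have hdiff : Stmt4Aux.ivl m (c jk) (c (jk + 1)) \ {(⟨c jk, hxm⟩ : Fin m)} =
          Stmt4Aux.ivl m (c jk + 1) (c (jk + 1)) := Stmt4Aux.ivl_sdiff_left hxm
      show u k (Stmt4Aux.ivl m (c jk) (c (jk + 1)) \ _) ≤ _
      rw [hdiff]
      have hle : u k (Stmt4Aux.ivl m (c jk + 1) (c (jk + 1))) ≤ OPT := by
        rw [← hsk, ← hVval jk hjk]
        exact hrem
      exact le_trans hle (hAi i)
  · -- optimality
    intro B hB
    set R : ℕ → ℕ :=
      fun j' => if h : j' < n then (B.bundle (σ ⟨j', h⟩)).sup (fun v => (v : ℕ) + 1) else 0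
      with hR
    have hRm : ∀ j', R j' ≤ m := by
      intro j'
      simp only [hR]
      split
      · exact Finset.sup_le (fun v _ => v.2)
      · exact Nat.zero_le m
    set e : ℕ → ℕ := fun j => if n ≤ j then m else (Finset.range j).sup R with he
    have he0 : e 0 = 0 := by
      simp only [he]
      rw [if_neg (by omega)]
      simp
    have hen : e n = m := by
      simp only [he]
      rw [if_pos le_rfl]
    have hesup : ∀ j, (Finset.range j).sup R ≤ m :=
      fun j => Finset.sup_le (fun j' _ => hRm j')
    have hech : Stmt4Aux.Chain e n := by
      intro i hi
      simp only [he]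
      rw [if_neg (by omega : ¬ n ≤ i)]
      by_cases h2 : n ≤ i + 1
      · rw [if_pos h2]
        exact hesup i
      · rw [if_neg h2]
        exact Finset.sup_mono (Finset.range_subset_range.mpr (by omega))
    have helem : ∀ (j : ℕ) (h : j < n) (v : Fin m), v ∈ B.bundle (σ ⟨j, h⟩) →
        e j ≤ (v : ℕ) ∧ (v : ℕ) < e (j + 1) := by
      intro j h v hv
      constructor
      · simp only [he]
        rw [if_neg (by omega : ¬ n ≤ j)]
        refine Finset.sup_le ?_
        intro j' hj'
        rw [Finset.mem_range] at hj'
        simp only [hR]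
        rw [dif_pos (by omega : j' < n)]
        refine Finset.sup_le ?_
        intro w hw
        have hlt := hB ⟨j', by omega⟩ ⟨j, h⟩ (by rw [Fin.lt_def]; exact hj') w hw v hv
        rw [Fin.lt_def] at hlt
        omega
      · have hx : (v : ℕ) + 1 ≤ R j := by
          simp only [hR]
          rw [dif_pos h]
          exact Finset.le_sup (f := fun w : Fin m => (w : ℕ) + 1) hv
        simp only [he]
        by_cases h2 : n ≤ j + 1
        · rw [if_pos h2]
          exact v.2
        · rw [if_neg h2]
          have hx2 : R j ≤ (Finset.range (j + 1)).sup R :=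
            Finset.le_sup (Finset.mem_range.mpr (by omega))
          omega
    have hfeasB : Stmt4Aux.Feas V n 0 m
        (univ.inf' ⟨⟨0, hn⟩, Finset.mem_univ _⟩ (fun i => u i (B.bundle i))) := by
      refine ⟨e, he0, hen, hech, ?_⟩
      intro j hj
      rw [hVval j hj]
      calc univ.inf' ⟨⟨0, hn⟩, Finset.mem_univ _⟩ (fun i => u i (B.bundle i))
          ≤ u (σ ⟨j, hj⟩) (B.bundle (σ ⟨j, hj⟩)) := Finset.inf'_le _ (Finset.mem_univ _)
        _ ≤ u (σ ⟨j, hj⟩) (Stmt4Aux.ivl m (e j) (e (j + 1))) := by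
            refine hmono _ _ _ (B.connected _) Stmt4Aux.isIvl_ivl ?_
            intro v hv
            exact Stmt4Aux.mem_ivl.mpr ⟨(helem j hj v hv).1, (helem j hj v hv).2⟩
    have hmuOPT : univ.inf' ⟨⟨0, hn⟩, Finset.mem_univ _⟩ (fun i => u i (B.bundle i)) ≤ OPT := by
      by_contra hcon
      push_neg at hcon
      exact Nat.findGreatest_is_greatest (P := fun lam => Stmt4Aux.Feas V n 0 m lam)
        hcon (hbound _ hfeasB) hfeasB
    refine le_trans hmuOPT ?_
    refine Finset.le_inf' _ _ ?_
    intro i' _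
    exact hAi i'
end

section
/- For agents with identical monotone valuations on a path, there exists a connected complete allocation that is envy-free up to one good (EF1). -/
open Finset

/-!
With identical valuations, EQ1 says that each nonempty bundle loses, for some good, all value
above the minimum bundle value `μ`. Among the ways to cut the path into `n` consecutive intervals,
take one minimising lexicographically `u univ - μ`, the number of bundles of value `μ`, and the
least, over bundles `i` of value `μ`, of `∑ₗ |Bₗ| · |l - i|`. A bundle `k` violating EQ1
keeps value above `μ` after losing any good, so hand its endpoint good on the side of a minimiser
`i` of the third component to its neighbour: no bundle falls below `μ` and no new bundle attains
it, and if neither `μ` nor its set of bundles changes, a good has moved one step closer to `i`.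
-/

namespace PathAlloc

def cutBundle (m : ℕ) (c : ℕ → ℕ) (j : ℕ) : Finset (Fin m) :=
  univ.filter fun x => c j ≤ x.val ∧ x.val < c (j + 1)

@[simp]
lemma mem_cutBundle {m : ℕ} {c : ℕ → ℕ} {j : ℕ} {x : Fin m} :
    x ∈ cutBundle m c j ↔ c j ≤ x.val ∧ x.val < c (j + 1) := by
  simp [cutBundle]

lemma isIvl_cutBundle (m : ℕ) (c : ℕ → ℕ) (j : ℕ) : IsIvl (cutBundle m c j) := by
  intro a b d ha hd hab hbd
  simp only [mem_cutBundle, Fin.le_def] at *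
  omega

lemma disjoint_cutBundle {m : ℕ} {c : ℕ → ℕ} (hc : Monotone c) {i j : ℕ} (hij : i ≠ j) :
    Disjoint (cutBundle m c i) (cutBundle m c j) := by
  wlog h : i < j generalizing i j
  · exact (this hij.symm (by omega)).symm
  have := hc (show i + 1 ≤ j by omega)
  exact disjoint_left.2 fun x hi hj => by simp only [mem_cutBundle] at hi hj; omega

structure IsCut (n m : ℕ) (c : ℕ → ℕ) : Prop where
  mono : Monotone c
  zero : c 0 = 0
  last : c n = m

lemma isCut_trivial {n : ℕ} (m : ℕ) (hn : 0 < n) :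
    IsCut n m fun t => if t = 0 then 0 else m where
  mono := monotone_nat_of_le_succ fun t => by
    simp only [Nat.add_one_ne_zero, if_false]
    split_ifs <;> omega
  zero := rfl
  last := if_neg hn.ne'

lemma IsCut.update {n m : ℕ} {c : ℕ → ℕ} (hc : IsCut n m c) {p v : ℕ} (hp0 : p ≠ 0)
    (hpn : p ≠ n) (hlo : c (p - 1) ≤ v) (hhi : v ≤ c (p + 1)) :
    IsCut n m (Function.update c p v) where
  mono := monotone_nat_of_le_succ fun t => by
    have := hc.mono (Nat.le_succ t)
    rcases eq_or_ne t p with rfl | htp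
    · simpa using hhi
    rcases eq_or_ne (t + 1) p with rfl | htp'
    · simpa [htp] using hlo
    simpa [Function.update_of_ne htp, Function.update_of_ne htp'] using this
  zero := by rw [Function.update_of_ne hp0.symm, hc.zero]
  last := by rw [Function.update_of_ne (Ne.symm hpn), hc.last]

lemma IsCut.exists_mem_cutBundle {n m : ℕ} {c : ℕ → ℕ} (hc : IsCut n m c) (x : Fin m) :
    ∃ j : Fin n, x ∈ cutBundle m c j := by
  have hex : ∃ j, x.val < c j := ⟨n, hc.last ▸ x.isLt⟩
  have hspec := Nat.find_spec hex
  obtain ⟨j, hj⟩ : ∃ j, Nat.find hex = j + 1 := Nat.exists_eq_succ_of_ne_zero fun h0 => by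
    rw [h0, hc.zero] at hspec; omega
  have hle : ¬ x.val < c j := Nat.find_min hex (by omega)
  have hjn : j + 1 ≤ n := hj ▸ Nat.find_min' hex (hc.last ▸ x.isLt)
  exact ⟨⟨j, by omega⟩, by rw [hj] at hspec; simp only [mem_cutBundle]; omega⟩

def cutBundles (n m : ℕ) (c : ℕ → ℕ) (j : Fin n) : Finset (Fin m) := cutBundle m c j

def cutAlloc (n : ℕ) {m : ℕ} {c : ℕ → ℕ} (hc : Monotone c) : Alloc n m where
  bundle := cutBundles n m c
  connected j := isIvl_cutBundle m c j
  disj _ _ h := disjoint_cutBundle hc (Fin.val_ne_of_ne h)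

section Update

variable {m : ℕ} (c : ℕ → ℕ) {g : Fin m}

lemma cutBundle_update_of_ne {p j : ℕ} (v : ℕ) (hj : j ≠ p) (hj' : j + 1 ≠ p) :
    cutBundle m (Function.update c p v) j = cutBundle m c j := by
  simp only [cutBundle, Function.update_of_ne hj, Function.update_of_ne hj']

lemma cutBundle_update_add_one_self (j : ℕ) (hg : g.val = c j) :
    cutBundle m (Function.update c j (c j + 1)) j = (cutBundle m c j).erase g := by
  ext x
  simp only [mem_cutBundle, mem_erase, Function.update_self,
    Function.update_of_ne (Nat.lt_add_one j).ne']
  omega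

lemma cutBundle_update_sub_one_self {j : ℕ} (hc : c j ≤ c (j + 1)) (hg : g.val + 1 = c j) :
    cutBundle m (Function.update c j (c j - 1)) j = insert g (cutBundle m c j) := by
  ext x
  simp only [mem_cutBundle, mem_insert, Fin.ext_iff, Function.update_self,
    Function.update_of_ne (Nat.lt_add_one j).ne']
  omega

lemma cutBundle_update_add_one_of_succ_eq {j p : ℕ} (hjp : j + 1 = p) (hc : c j ≤ c p)
    (hg : g.val = c p) :
    cutBundle m (Function.update c p (c p + 1)) j = insert g (cutBundle m c j) := by
  subst hjp
  ext x
  simp only [mem_cutBundle, mem_insert, Fin.ext_iff, Function.update_self,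
    Function.update_of_ne (Nat.lt_add_one j).ne]
  omega

lemma cutBundle_update_sub_one_of_succ_eq {j p : ℕ} (hjp : j + 1 = p) (hg : g.val + 1 = c p) :
    cutBundle m (Function.update c p (c p - 1)) j = (cutBundle m c j).erase g := by
  subst hjp
  ext x
  simp only [mem_cutBundle, mem_erase, Function.update_self,
    Function.update_of_ne (Nat.lt_add_one j).ne]
  omega

end Update

section Spread

variable {n m : ℕ}

def spread (B : Fin n → Finset (Fin m)) (i : Fin n) : ℕ :=
  ∑ l, #(B l) * Nat.dist l i

lemma spread_add_dist_of_move {B B' : Fin n → Finset (Fin m)} {k k' : Fin n} (hkk' : k ≠ k')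
    (hother : ∀ l, l ≠ k → l ≠ k' → B' l = B l)
    (hcard : #(B' k) + 1 = #(B k)) (hcard' : #(B' k') = #(B k') + 1) (i : Fin n) :
    spread B' i + Nat.dist k i = spread B i + Nat.dist k' i := by
  have hterm : ∀ l, #(B' l) * Nat.dist l i + (if k = l then Nat.dist l i else 0) =
      #(B l) * Nat.dist l i + (if k' = l then Nat.dist l i else 0) := by
    intro l
    by_cases hl : l = k
    · subst hl; rw [if_pos rfl, if_neg hkk'.symm, ← hcard]; ring
    by_cases hl' : l = k'
    · subst hl'; rw [if_neg hkk', if_pos rfl, hcard']; ring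
    rw [if_neg (Ne.symm hl), if_neg (Ne.symm hl'), hother l hl hl']
  have := Finset.sum_congr rfl fun l (_ : l ∈ univ) => hterm l
  simpa only [sum_add_distrib, sum_ite_eq, mem_univ, if_true, spread] using this

end Spread

section Potential

variable {n m : ℕ} [NeZero n] (u : Finset (Fin m) → ℕ) (B : Fin n → Finset (Fin m))

def minVal : ℕ := univ.inf' univ_nonempty fun j => u (B j)

def minBundles : Finset (Fin n) := univ.filter fun j => u (B j) = minVal u B

lemma minVal_le (j : Fin n) : minVal u B ≤ u (B j) :=
  inf'_le _ (mem_univ j)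

lemma minBundles_nonempty : (minBundles u B).Nonempty := by
  obtain ⟨j, -, hj⟩ := exists_mem_eq_inf' univ_nonempty fun j => u (B j)
  exact ⟨j, mem_filter.2 ⟨mem_univ j, hj.symm⟩⟩

def minSpread : ℕ := (minBundles u B).inf' (minBundles_nonempty u B) (spread B)

lemma exists_mem_minBundles_spread_eq :
    ∃ i ∈ minBundles u B, spread B i = minSpread u B := by
  obtain ⟨i, hi, h⟩ := exists_mem_eq_inf' (minBundles_nonempty u B) (spread B)
  exact ⟨i, hi, h.symm⟩

def ViolatesEQ1 (k : Fin n) : Prop :=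
  ∀ v ∈ B k, minVal u B < u ((B k).erase v)

def potential : ℕ ×ₗ ℕ ×ₗ ℕ :=
  toLex (u univ - minVal u B, toLex (#(minBundles u B), minSpread u B))

variable {u B} {B' : Fin n → Finset (Fin m)} {k k' : Fin n}

theorem potential_lt_of_move {i : Fin n} (hother : ∀ l, l ≠ k → l ≠ k' → B' l = B l)
    (hcard : #(B' k) + 1 = #(B k)) (hcard' : #(B' k') = #(B k') + 1)
    (hk : minVal u B < u (B' k)) (hk' : u (B k') ≤ u (B' k')) (htop : minVal u B' ≤ u univ)
    (hi : i ∈ minBundles u B) (hspread : spread B i = minSpread u B)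
    (hdist : Nat.dist k' i < Nat.dist k i) :
    potential u B' < potential u B := by
  have hkk' : k ≠ k' := by rintro rfl; exact hdist.false
  have hlow : ∀ l, minVal u B ≤ u (B' l) := by
    intro l
    by_cases hl : l = k
    · subst hl; exact hk.le
    by_cases hl' : l = k'
    · subst hl'; exact (minVal_le u B l).trans hk'
    rw [hother l hl hl']; exact minVal_le u B l
  have hmin_le : minVal u B ≤ minVal u B' := le_inf' _ _ fun l _ => hlow l
  rcases hmin_le.lt_or_eq with hlt | hmin
  · exact Prod.Lex.toLex_lt_toLex.2 (Or.inl (show u univ - _ < u univ - _ by omega))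
  have hsub : minBundles u B' ⊆ minBundles u B := by
    intro j hj
    simp only [minBundles, mem_filter, mem_univ, true_and, ← hmin] at hj ⊢
    by_cases hjk : j = k
    · subst hjk; omega
    by_cases hjk' : j = k'
    · subst hjk'; have := minVal_le u B j; omega
    rwa [hother j hjk hjk'] at hj
  refine Prod.Lex.toLex_lt_toLex.2 (Or.inr ⟨by rw [hmin], Prod.Lex.toLex_lt_toLex.2 ?_⟩)
  rcases (card_le_card hsub).lt_or_eq with hlt | hcard_eq
  · exact Or.inl hlt
  have hi' : i ∈ minBundles u B' := by rwa [eq_of_subset_of_card_le hsub hcard_eq.ge]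
  have hmove := spread_add_dist_of_move hkk' hother hcard hcard' i
  have : minSpread u B' ≤ spread B' i := inf'_le _ hi'
  exact Or.inr ⟨hcard_eq, by omega⟩

end Potential

def IntervalMonotone {m : ℕ} (u : Finset (Fin m) → ℕ) : Prop :=
  ∀ S S', IsIvl S → IsIvl S' → S ⊆ S' → u S ≤ u S'

section CutMoves

variable {n m : ℕ} [NeZero n] {u : Finset (Fin m) → ℕ}

lemma minVal_cutBundles_le_univ (hmono : IntervalMonotone u)
    (c : ℕ → ℕ) : minVal u (cutBundles n m c) ≤ u univ :=
  (minVal_le u _ 0).trans <|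
    hmono _ _ (isIvl_cutBundle m c 0) (fun _ _ _ _ _ _ _ => mem_univ _) (subset_univ _)

lemma minVal_lt_of_violatesEQ1 (hmono : IntervalMonotone u)
    {c : ℕ → ℕ} {k : Fin n} (hne : (cutBundle m c k).Nonempty)
    (hviol : ViolatesEQ1 u (cutBundles n m c) k) :
    minVal u (cutBundles n m c) < u (cutBundle m c k) := by
  obtain ⟨x, hx⟩ := hne
  rw [mem_cutBundle] at hx
  let g : Fin m := ⟨c k, by omega⟩
  have herase := cutBundle_update_add_one_self (m := m) c k (g := g) rfl
  refine (hviol g (mem_cutBundle.2 ⟨le_rfl, by simp only [g]; omega⟩)).trans_le ?_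
  exact hmono _ _ (herase ▸ isIvl_cutBundle _ _ _) (isIvl_cutBundle m c k) (erase_subset g _)

lemma potential_cutBundles_lt_of_move
    (hmono : IntervalMonotone u) {c c' : ℕ → ℕ} {k k' i : Fin n}
    {g : Fin m}
    (hother : ∀ l : Fin n, l ≠ k → l ≠ k' → cutBundle m c' l = cutBundle m c l)
    (hg : g ∈ cutBundle m c k) (hg' : g ∉ cutBundle m c k')
    (hk : cutBundle m c' k = (cutBundle m c k).erase g)
    (hk' : cutBundle m c' k' = insert g (cutBundle m c k'))
    (hviol : ViolatesEQ1 u (cutBundles n m c) k)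
    (hi : i ∈ minBundles u (cutBundles n m c))
    (hspread : spread (cutBundles n m c) i = minSpread u (cutBundles n m c))
    (hdist : Nat.dist k' i < Nat.dist k i) :
    potential u (cutBundles n m c') < potential u (cutBundles n m c) := by
  refine potential_lt_of_move hother ?_ ?_ ?_ ?_ (minVal_cutBundles_le_univ hmono c') hi hspread
    hdist
  · rw [cutBundles, hk]; exact card_erase_add_one hg
  · rw [cutBundles, hk']; exact card_insert_of_notMem hg'
  · rw [cutBundles, hk]; exact hviol g hg
  · refine hmono _ _ (isIvl_cutBundle m c k') (isIvl_cutBundle m c' k') ?_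
    rw [cutBundles, cutBundles, hk']; exact subset_insert g _

lemma IsCut.exists_potential_lt_of_lt (hmono : IntervalMonotone u)
    {c : ℕ → ℕ} (hc : IsCut n m c) {i k : Fin n} (hik : i < k)
    (hne : (cutBundle m c k).Nonempty)
    (hviol : ViolatesEQ1 u (cutBundles n m c) k)
    (hi : i ∈ minBundles u (cutBundles n m c))
    (hspread : spread (cutBundles n m c) i = minSpread u (cutBundles n m c)) :
    ∃ c', IsCut n m c' ∧ potential u (cutBundles n m c') < potential u (cutBundles n m c) := by
  obtain ⟨x, hx⟩ := hne
  rw [mem_cutBundle] at hx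
  have hik' : (i : ℕ) < k := hik
  let g : Fin m := ⟨c k, by omega⟩
  let k' : Fin n := ⟨k - 1, by omega⟩
  have hk'k : (k' : ℕ) + 1 = k := Nat.sub_add_cancel (by omega)
  have hprev : c (k - 1) ≤ c k := hc.mono (Nat.sub_le _ _)
  refine ⟨Function.update c k (c k + 1),
    hc.update (by omega) (by omega) (by omega) (by omega),
    potential_cutBundles_lt_of_move hmono (k' := k') (g := g) ?_ ?_ ?_
      (cutBundle_update_add_one_self c k rfl)
      (cutBundle_update_add_one_of_succ_eq c hk'k (hk'k ▸ hprev) rfl) hviol hi hspread ?_⟩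
  · intro l hl hl'
    refine cutBundle_update_of_ne c _ (fun h => hl (Fin.ext h)) fun h => hl' (Fin.ext ?_)
    simp only [k']; omega
  · simp only [mem_cutBundle, g]; omega
  · simp only [mem_cutBundle, g, hk'k]; omega
  · simp only [Nat.dist, k']; omega

lemma IsCut.exists_potential_lt_of_gt (hmono : IntervalMonotone u)
    {c : ℕ → ℕ} (hc : IsCut n m c) {i k : Fin n} (hki : k < i)
    (hne : (cutBundle m c k).Nonempty)
    (hviol : ViolatesEQ1 u (cutBundles n m c) k)
    (hi : i ∈ minBundles u (cutBundles n m c))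
    (hspread : spread (cutBundles n m c) i = minSpread u (cutBundles n m c)) :
    ∃ c', IsCut n m c' ∧ potential u (cutBundles n m c') < potential u (cutBundles n m c) := by
  obtain ⟨x, hx⟩ := hne
  rw [mem_cutBundle] at hx
  have hki' : (k : ℕ) < i := hki
  have hlast : c (k + 1) ≤ m := hc.last ▸ hc.mono (show (k : ℕ) + 1 ≤ n by omega)
  let g : Fin m := ⟨c (k + 1) - 1, by omega⟩
  let k' : Fin n := ⟨k + 1, by omega⟩
  have hg : g.val + 1 = c (k + 1) := by simp only [g]; omega
  have hnext : c (k + 1) ≤ c (k + 1 + 1) := hc.mono (Nat.le_succ _)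
  refine ⟨Function.update c (k + 1) (c (k + 1) - 1),
    hc.update (by omega) (by omega) (by rw [Nat.add_sub_cancel]; omega) (by omega),
    potential_cutBundles_lt_of_move hmono (k' := k') (g := g) ?_ ?_ ?_
      (cutBundle_update_sub_one_of_succ_eq c rfl hg)
      (cutBundle_update_sub_one_self c hnext hg) hviol hi hspread ?_⟩
  · intro l hl hl'
    refine cutBundle_update_of_ne c _ (fun h => hl' (Fin.ext h)) fun h => hl (Fin.ext ?_)
    omega
  · simp only [mem_cutBundle, g]; omega
  · simp only [mem_cutBundle, g, k']; omega
  · simp only [Nat.dist, k']; omega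

lemma IsCut.exists_potential_lt (hmono : IntervalMonotone u)
    {c : ℕ → ℕ} (hc : IsCut n m c) {k : Fin n} (hne : (cutBundle m c k).Nonempty)
    (hviol : ViolatesEQ1 u (cutBundles n m c) k) :
    ∃ c', IsCut n m c' ∧ potential u (cutBundles n m c') < potential u (cutBundles n m c) := by
  obtain ⟨i, hi, hspread⟩ := exists_mem_minBundles_spread_eq u (cutBundles n m c)
  rcases lt_trichotomy i k with hik | rfl | hki
  · exact hc.exists_potential_lt_of_lt hmono hik hne hviol hi hspread
  · exact absurd (mem_filter.1 hi).2 (minVal_lt_of_violatesEQ1 hmono hne hviol).ne'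
  · exact hc.exists_potential_lt_of_gt hmono hki hne hviol hi hspread

lemma exists_isCut_forall_not_potential_lt (u : Finset (Fin m) → ℕ) :
    ∃ c, IsCut n m c ∧
      ∀ c', IsCut n m c' → ¬ potential u (cutBundles n m c') < potential u (cutBundles n m c) :=
  (InvImage.wf (fun c => potential u (cutBundles n m c)) wellFounded_lt).has_min
    {c | IsCut n m c} ⟨_, isCut_trivial m (Nat.pos_of_neZero n)⟩

end CutMoves

end PathAlloc

theorem stmt5_general {n m : ℕ} (hn : 0 < n) (u : Finset (Fin m) → ℕ)
    (hmono : ∀ S S', IsIvl S → IsIvl S' → S ⊆ S' → u S ≤ u S') :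
    ∃ A : Alloc n m, A.Complete ∧
      ∀ i k : Fin n, (A.bundle k).Nonempty →
        ∃ v ∈ A.bundle k, u (A.bundle k \ {v}) ≤ u (A.bundle i) := by
  have : NeZero n := ⟨hn.ne'⟩
  obtain ⟨c, hc, hmin⟩ := PathAlloc.exists_isCut_forall_not_potential_lt (n := n) u
  refine ⟨PathAlloc.cutAlloc n hc.mono, hc.exists_mem_cutBundle, fun i k hne => ?_⟩
  by_contra! hviol
  obtain ⟨c', hc', hlt⟩ := hc.exists_potential_lt hmono hne fun v hv =>
    (PathAlloc.minVal_le u _ i).trans_lt (by rw [← sdiff_singleton_eq_erase]; exact hviol v hv)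
  exact hmin c' hc' hlt

theorem stmt5 {n m : ℕ} (hn : 0 < n) (u : Finset (Fin m) → ℕ)
    (hmono : ∀ S S', IsIvl S → IsIvl S' → S ⊆ S' → u S ≤ u S') (hempty : u ∅ = 0) :
    ∃ A : Alloc n m, A.Complete ∧
      ∀ i k : Fin n, (A.bundle k).Nonempty →
        ∃ v ∈ A.bundle k, u (A.bundle k \ {v}) ≤ u (A.bundle i) :=
  stmt5_general hn u hmono
end

section
/- There exists an instance on a path with 5 goods and 3 agents with binary additive valuations and an ordering σ such that the unique connected, σ-consistent, complete, Pareto optimal allocation violates EQ1; hence connected EQ1 + Pareto optimal allocations consistent with a given ordering need not exist. -/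
open Finset

def val14 : Fin 3 → Fin 5 → ℕ := ![![1,0,0,0,0], ![0,1,0,0,0], ![0,0,1,1,1]]

/-
Each good is valued by exactly one agent, so handing every good to the agent who values it gives
all agents their maximum utility at once: this allocation is Pareto optimal, and any Pareto optimal
allocation must give every agent its maximum as well, hence contain the same bundles, and by
disjointness coincide with it. It is consistent with the identity ordering, but agent 0 ends with
utility 1 while agent 2 keeps utility 2 after losing any one of its three goods.
-/

lemma Alloc.ext_bundle {n m : ℕ} {A B : Alloc n m} (h : A.bundle = B.bundle) : A = B := by
  cases A; cases B; cases h; rfl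

section MaximalUtility

variable {n m : ℕ} {val : Fin n → Fin m → ℕ}

lemma util_le_util_univ (i : Fin n) (S : Finset (Fin m)) : util val i S ≤ util val i univ :=
  sum_le_sum_of_subset (subset_univ S)

lemma mem_of_util_eq_util_univ {i : Fin n} {S : Finset (Fin m)}
    (hS : util val i S = util val i univ) {v : Fin m} (hv : val i v ≠ 0) : v ∈ S := by
  by_contra hvS
  have : util val i S < util val i (insert v S) := by
    rw [util, util, sum_insert hvS]
    omega
  exact absurd (hS ▸ this) (not_lt.mpr (util_le_util_univ i _))

lemma util_eq_util_univ_of_bundle_eq_filter {A : Alloc n m}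
    (hA : ∀ i, A.bundle i = univ.filter (fun v => val i v ≠ 0)) (i : Fin n) :
    util val i (A.bundle i) = util val i univ := by
  rw [hA, util, util, sum_filter_ne_zero]

lemma paretoOptimal_of_util_eq_util_univ {A : Alloc n m}
    (hA : ∀ i, util val i (A.bundle i) = util val i univ) : ParetoOptimal val A := by
  rintro ⟨B, -, i, hlt⟩
  exact absurd (util_le_util_univ i (B.bundle i)) (not_le.mpr (hA i ▸ hlt))

lemma util_eq_util_univ_of_paretoOptimal {A B : Alloc n m}
    (hA : ∀ i, util val i (A.bundle i) = util val i univ) (hB : ParetoOptimal val B) (i : Fin n) :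
    util val i (B.bundle i) = util val i univ := by
  refine le_antisymm (util_le_util_univ i _) (not_lt.mp fun hlt => hB ⟨A, ?_, i, hA i ▸ hlt⟩)
  exact fun j => hA j ▸ util_le_util_univ j _

end MaximalUtility

lemma Alloc.eq_of_complete_of_bundle_subset {n m : ℕ} {A B : Alloc n m} (hA : A.Complete)
    (hAB : ∀ i, A.bundle i ⊆ B.bundle i) : B = A := by
  refine Alloc.ext_bundle (funext fun i => Subset.antisymm (fun v hv => ?_) (hAB i))
  obtain ⟨j, hj⟩ := hA v
  obtain rfl : j = i := by
    by_contra hji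
    exact disjoint_left.mp (B.disj j i hji) (hAB j hj) hv
  exact hj

lemma Alloc.eq_of_paretoOptimal {n m : ℕ} {val : Fin n → Fin m → ℕ} {A B : Alloc n m}
    (hA : A.Complete) (hAval : ∀ i, A.bundle i = univ.filter (fun v => val i v ≠ 0))
    (hB : ParetoOptimal val B) : B = A := by
  have hBmax := util_eq_util_univ_of_paretoOptimal
    (util_eq_util_univ_of_bundle_eq_filter hAval) hB
  refine Alloc.eq_of_complete_of_bundle_subset hA fun i v hv => ?_
  rw [hAval, mem_filter] at hv
  exact mem_of_util_eq_util_univ (hBmax i) hv.2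

def alloc14 : Alloc 3 5 where
  bundle := ![{0}, {1}, {2, 3, 4}]
  connected := by unfold IsIvl; decide
  disj := by decide

lemma alloc14_bundle_eq_filter (i : Fin 3) :
    alloc14.bundle i = univ.filter (fun v => val14 i v ≠ 0) := by
  revert i; decide

lemma alloc14_complete : alloc14.Complete := by
  unfold Alloc.Complete; decide

lemma alloc14_consistent : Consistent (Equiv.refl (Fin 3)) alloc14 := by
  unfold Consistent; decide

lemma not_eq1_alloc14 : ¬ EQ1 (util val14) alloc14 := by
  intro h
  obtain ⟨v, hv, hle⟩ := h 0 2 (by decide)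
  revert v; decide

theorem stmt14 :
    (∃ A : Alloc 3 5,
      (Consistent (Equiv.refl (Fin 3)) A ∧ A.Complete ∧ ParetoOptimal val14 A) ∧
      (∀ B : Alloc 3 5,
        Consistent (Equiv.refl (Fin 3)) B ∧ B.Complete ∧ ParetoOptimal val14 B → B = A) ∧
      ¬ EQ1 (util val14) A) ∧
    ¬ ∃ A : Alloc 3 5,
        Consistent (Equiv.refl (Fin 3)) A ∧ A.Complete ∧ ParetoOptimal val14 A ∧
          EQ1 (util val14) A := by
  have huniq : ∀ B : Alloc 3 5, ParetoOptimal val14 B → B = alloc14 := fun _ =>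
    Alloc.eq_of_paretoOptimal alloc14_complete alloc14_bundle_eq_filter
  have hpo : ParetoOptimal val14 alloc14 := paretoOptimal_of_util_eq_util_univ
    (util_eq_util_univ_of_bundle_eq_filter alloc14_bundle_eq_filter)
  refine ⟨⟨alloc14, ⟨alloc14_consistent, alloc14_complete, hpo⟩,
    fun B hB => huniq B hB.2.2, not_eq1_alloc14⟩, ?_⟩
  rintro ⟨B, -, -, hB, hEQ1⟩
  exact not_eq1_alloc14 (huniq B hB ▸ hEQ1)
end

section
/- Under binary left-extremal additive valuations on a path, if a connected non-wasteful EQ1 allocation exists, then there exists one in which agents receive intervals in the order of their interval endpoints ℓ_i (i.e., if agent i's bundle lies to the left of agent k's bundle then ℓ_i ≤ ℓ_k, after reordering agents). -/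
open Finset

-- AUX START
def swapAlloc {n m : ℕ} (A : Alloc n m) (i k : Fin n) : Alloc n m where
  bundle j := A.bundle (Equiv.swap i k j)
  connected j := A.connected _
  disj j j' h := A.disj _ _ (fun e => h ((Equiv.swap i k).injective e))

/-- holder values every good in its bundle -/
lemma holder_val {n m : ℕ} {val : Fin n → Fin m → ℕ} {A : Alloc n m}
    (hNW : NonWasteful val A) {j : Fin n} {v : Fin m} (hv : v ∈ A.bundle j) :
    val j v = 1 := by
  obtain ⟨i, hi, hival⟩ := hNW v
  rcases eq_or_ne i j with rfl | hne
  · exact hival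
  · exact absurd (Finset.disjoint_left.mp (A.disj i j hne) hi hv) (by simp [hv])

lemma util_card {n m : ℕ} {val : Fin n → Fin m → ℕ} {i : Fin n} {S : Finset (Fin m)}
    (h : ∀ v ∈ S, val i v = 1) : util val i S = S.card := by
  unfold util
  rw [Finset.sum_congr rfl h]
  simp

lemma eq1_card {n m : ℕ} {val : Fin n → Fin m → ℕ} {A : Alloc n m}
    (hNW : NonWasteful val A) (hEQ : EQ1 (util val) A) (i k : Fin n)
    (hk : (A.bundle k).Nonempty) : (A.bundle k).card ≤ (A.bundle i).card + 1 := by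
  obtain ⟨v, hv, hle⟩ := hEQ i k hk
  have h1 : util val k (A.bundle k \ {v}) = (A.bundle k \ {v}).card :=
    util_card (fun w hw => holder_val hNW (Finset.mem_sdiff.mp hw).1)
  have h2 : util val i (A.bundle i) = (A.bundle i).card :=
    util_card (fun w hw => holder_val hNW hw)
  have h3 : (A.bundle k \ {v}).card = (A.bundle k).card - 1 := by
    rw [Finset.sdiff_singleton_eq_erase, Finset.card_erase_of_mem hv]
  rw [h1, h2, h3] at hle
  omega

lemma card_eq1 {n m : ℕ} {val : Fin n → Fin m → ℕ} {A : Alloc n m}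
    (hNW : NonWasteful val A)
    (h : ∀ i k, (A.bundle k).Nonempty → (A.bundle k).card ≤ (A.bundle i).card + 1) :
    EQ1 (util val) A := by
  intro i k hk
  obtain ⟨v, hv⟩ := hk
  refine ⟨v, hv, ?_⟩
  have h1 : util val k (A.bundle k \ {v}) = (A.bundle k \ {v}).card :=
    util_card (fun w hw => holder_val hNW (Finset.mem_sdiff.mp hw).1)
  have h2 : util val i (A.bundle i) = (A.bundle i).card :=
    util_card (fun w hw => holder_val hNW hw)
  have h3 : (A.bundle k \ {v}).card = (A.bundle k).card - 1 := by
    rw [Finset.sdiff_singleton_eq_erase, Finset.card_erase_of_mem hv]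
  have := h i k ⟨v, hv⟩
  omega

def Phi {n m : ℕ} (ℓ : Fin n → ℕ) (A : Alloc n m) : ℕ :=
  ∑ j, ℓ j * (A.bundle j).sup (fun v => (v : ℕ) + 1)

lemma Phi_le {n m : ℕ} (ℓ : Fin n → ℕ) (hℓ : ∀ i, 1 ≤ ℓ i ∧ ℓ i ≤ m)
    (A : Alloc n m) : Phi ℓ A ≤ n * (m * m) := by
  have : ∀ j : Fin n, ℓ j * (A.bundle j).sup (fun v => (v : ℕ) + 1) ≤ m * m := by
    intro j
    have h1 : (A.bundle j).sup (fun v => (v : ℕ) + 1) ≤ m :=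
      Finset.sup_le (fun v _ => v.isLt)
    exact Nat.mul_le_mul (hℓ j).2 h1
  calc Phi ℓ A ≤ ∑ _j : Fin n, m * m := Finset.sum_le_sum (fun j _ => this j)
    _ = n * (m * m) := by simp [Finset.sum_const, Finset.card_univ]

lemma main_aux {n m : ℕ} (ℓ : Fin n → ℕ) (hℓ : ∀ i, 1 ≤ ℓ i ∧ ℓ i ≤ m)
    (val : Fin n → Fin m → ℕ)
    (hval : ∀ i j, val i j = if (j : ℕ) < ℓ i then 1 else 0) :
    ∀ (c : ℕ) (A : Alloc n m), NonWasteful val A → EQ1 (util val) A →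
      n * (m * m) < Phi ℓ A + c →
    ∃ B : Alloc n m, NonWasteful val B ∧ EQ1 (util val) B ∧
      ∀ i k : Fin n, (B.bundle i).Nonempty → (B.bundle k).Nonempty →
        (∀ x ∈ B.bundle i, ∀ y ∈ B.bundle k, x < y) → ℓ i ≤ ℓ k := by
  intro c
  induction c with
  | zero =>
    intro A _ _ hc
    exact absurd (Phi_le ℓ hℓ A) (by omega)
  | succ c ih =>
    intro A hNW hEQ hc
    by_cases hs : ∀ i k : Fin n, (A.bundle i).Nonempty → (A.bundle k).Nonempty →
        (∀ x ∈ A.bundle i, ∀ y ∈ A.bundle k, x < y) → ℓ i ≤ ℓ k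
    · exact ⟨A, hNW, hEQ, hs⟩
    push_neg at hs
    obtain ⟨i, k, hi, hk, hleft, hlk⟩ := hs
    have hik : i ≠ k := by
      rintro rfl
      obtain ⟨x, hx⟩ := hi
      exact lt_irrefl x (hleft x hx x hx)
    set B := swapAlloc A i k with hB
    have hBb : ∀ j, B.bundle j = A.bundle (Equiv.swap i k j) := fun _ => rfl
    -- values: elements of bundle i are valued by k, elements of bundle k by i
    obtain ⟨y₀, hy₀⟩ := hk
    have hy₀v : (y₀ : ℕ) < ℓ k := by
      have := holder_val hNW hy₀
      rw [hval] at this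
      by_contra h; simp [h] at this
    have hvalik : ∀ v ∈ A.bundle i, val k v = 1 := by
      intro v hv
      have : (v : ℕ) < ℓ k := lt_trans (by exact_mod_cast hleft v hv y₀ hy₀) hy₀v
      simp [hval, this]
    have hvalki : ∀ v ∈ A.bundle k, val i v = 1 := by
      intro v hv
      have hvk : (v : ℕ) < ℓ k := by
        have := holder_val hNW hv
        rw [hval] at this
        by_contra h; simp [h] at this
      simp [hval, lt_trans hvk hlk]
    -- NonWasteful for B
    have hNWB : NonWasteful val B := by
      intro v
      obtain ⟨j, hj, hjval⟩ := hNW v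
      refine ⟨Equiv.swap i k j, ?_, ?_⟩
      · rw [hBb, Equiv.swap_apply_self]; exact hj
      · rcases eq_or_ne j i with rfl | hji
        · rw [Equiv.swap_apply_left]; exact hvalik v hj
        rcases eq_or_ne j k with rfl | hjk
        · rw [Equiv.swap_apply_right]; exact hvalki v hj
        · rwa [Equiv.swap_apply_of_ne_of_ne hji hjk]
    -- EQ1 for B
    have hEQB : EQ1 (util val) B := by
      apply card_eq1 hNWB
      intro a b hb
      rw [hBb, hBb]
      exact eq1_card hNW hEQ _ _ (by rwa [hBb] at hb)
    -- Phi increases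
    have hPhi : Phi ℓ A < Phi ℓ B := by
      have hsplit : ∀ g : Fin n → ℕ,
          ∑ j, g j = g i + (g k + ∑ j ∈ (univ.erase i).erase k, g j) := by
        intro g
        rw [← Finset.add_sum_erase univ g (Finset.mem_univ i),
          ← Finset.add_sum_erase _ g (Finset.mem_erase.mpr ⟨(Ne.symm hik), Finset.mem_univ k⟩)]
      have htail : ∀ j ∈ (univ.erase i).erase k,
          ℓ j * (B.bundle j).sup (fun v => (v : ℕ) + 1)
            = ℓ j * (A.bundle j).sup (fun v => (v : ℕ) + 1) := by
        intro j hj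
        simp only [Finset.mem_erase] at hj
        rw [hBb, Equiv.swap_apply_of_ne_of_ne hj.2.1 hj.1]
      have hfi : (A.bundle i).sup (fun v => (v : ℕ) + 1) < (A.bundle k).sup (fun v => (v : ℕ) + 1) := by
        have h1 : (A.bundle i).sup (fun v => (v : ℕ) + 1) ≤ (y₀ : ℕ) :=
          Finset.sup_le (fun v hv => by exact_mod_cast hleft v hv y₀ hy₀)
        have h2 : (y₀ : ℕ) + 1 ≤ (A.bundle k).sup (fun v => (v : ℕ) + 1) :=
          Finset.le_sup (f := fun v : Fin m => (v : ℕ) + 1) hy₀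
        omega
      rw [Phi, Phi, hsplit, hsplit, Finset.sum_congr rfl htail]
      rw [hBb, hBb, Equiv.swap_apply_left, Equiv.swap_apply_right]
      set a := (A.bundle i).sup (fun v => (v : ℕ) + 1)
      set b := (A.bundle k).sup (fun v => (v : ℕ) + 1)
      have : ℓ i * a + ℓ k * b < ℓ i * b + ℓ k * a := by nlinarith [hfi, hlk]
      omega
    exact ih B hNWB hEQB (by omega)

theorem stmt16 {n m : ℕ} (ℓ : Fin n → ℕ) (hℓ : ∀ i, 1 ≤ ℓ i ∧ ℓ i ≤ m)
    (val : Fin n → Fin m → ℕ)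
    (hval : ∀ i j, val i j = if (j : ℕ) < ℓ i then 1 else 0)
    (hex : ∃ A : Alloc n m, NonWasteful val A ∧ EQ1 (util val) A) :
    ∃ B : Alloc n m, NonWasteful val B ∧ EQ1 (util val) B ∧
      ∀ i k : Fin n, (B.bundle i).Nonempty → (B.bundle k).Nonempty →
        (∀ x ∈ B.bundle i, ∀ y ∈ B.bundle k, x < y) → ℓ i ≤ ℓ k := by
  obtain ⟨A, hNW, hEQ⟩ := hex
  exact main_aux ℓ hℓ val hval (n * (m * m) + 1) A hNW hEQ (by omega)
end

section
/- Under binary left-extremal additive valuations with parameters ℓ_1 ≤ ℓ_2 ≤ ... ≤ ℓ_n on a path with m goods, the left-to-right allocation giving the first n_f agents ⌊m/n⌋ consecutive goods each and the remaining n_c agents ⌈m/n⌉ consecutive goods each (where n_f·⌊m/n⌋ + n_c·⌈m/n⌉ = m, n_f + n_c = n) is non-wasteful and EQ1 if and only if the instance admits some connected non-wasteful EQ1 allocation. -/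
open Finset

def blockSize (n m nf : ℕ) (i : Fin n) : ℕ :=
  if (i : ℕ) < nf then m / n else (m + n - 1) / n

def blockStart (n m nf : ℕ) (i : Fin n) : ℕ :=
  ∑ k ∈ Finset.univ.filter (fun k : Fin n => k < i), blockSize n m nf k

namespace Stmt17Aux

variable {n : ℕ}

def S (f : Fin n → ℕ) (t : ℕ) : ℕ :=
  ∑ k ∈ Finset.univ.filter (fun k : Fin n => (k : ℕ) < t), f k

lemma filter_card (t : ℕ) (ht : t ≤ n) :
    (Finset.univ.filter (fun k : Fin n => (k : ℕ) < t)).card = t := by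
  rw [← Finset.card_range t]
  apply Finset.card_bij (fun (k : Fin n) _ => (k : ℕ))
  · intro a ha
    simp only [Finset.mem_filter] at ha
    simpa using ha.2
  · intro a _ b _ hab
    exact Fin.val_injective hab
  · intro b hb
    simp only [Finset.mem_range] at hb
    exact ⟨⟨b, lt_of_lt_of_le hb ht⟩, by simp [hb], rfl⟩

lemma S_zero (f : Fin n → ℕ) : S f 0 = 0 := by simp [S]

lemma S_succ (f : Fin n → ℕ) {t : ℕ} (ht : t < n) :
    S f (t + 1) = S f t + f ⟨t, ht⟩ := by
  unfold S
  have h : Finset.univ.filter (fun k : Fin n => (k : ℕ) < t + 1)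
      = insert ⟨t, ht⟩ (Finset.univ.filter (fun k : Fin n => (k : ℕ) < t)) := by
    ext k
    simp only [Finset.mem_filter, Finset.mem_univ, true_and, Finset.mem_insert, Fin.ext_iff]
    omega
  rw [h, Finset.sum_insert (by simp)]
  ring

lemma S_mono (f : Fin n → ℕ) : Monotone (S f) := by
  intro s t hst
  apply Finset.sum_le_sum_of_subset
  intro k hk
  simp only [Finset.mem_filter, Finset.mem_univ, true_and] at hk ⊢
  omega

lemma S_top (f : Fin n → ℕ) : S f n = ∑ k, f k := by
  unfold S
  rw [Finset.filter_true_of_mem (fun k _ => k.isLt)]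

lemma S_const_prefix (f : Fin n → ℕ) (a t : ℕ) (ht : t ≤ n)
    (h : ∀ k : Fin n, (k : ℕ) < t → f k = a) : S f t = t * a := by
  unfold S
  rw [Finset.sum_congr rfl (fun k hk => h k (by simpa using (Finset.mem_filter.mp hk).2)),
    Finset.sum_const, filter_card t ht, smul_eq_mul]

lemma S_suffix_const (f : Fin n → ℕ) (b t : ℕ) (ht : t ≤ n)
    (h : ∀ k : Fin n, t ≤ (k : ℕ) → f k = b) : S f n = S f t + (n - t) * b := by
  have hsplit := Finset.sum_filter_add_sum_filter_not Finset.univ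
    (fun k : Fin n => (k : ℕ) < t) f
  have hcard := Finset.card_filter_add_card_filter_not
    (s := (Finset.univ : Finset (Fin n))) (p := fun k : Fin n => (k : ℕ) < t)
  rw [filter_card t ht, Finset.card_univ, Fintype.card_fin] at hcard
  have hconst : ∑ k ∈ Finset.univ.filter (fun k : Fin n => ¬ (k : ℕ) < t), f k
      = (n - t) * b := by
    rw [Finset.sum_congr rfl (fun k hk => h k (by
      have := (Finset.mem_filter.mp hk).2; omega)), Finset.sum_const, smul_eq_mul]
    congr 1
    omega
  rw [S_top, ← hsplit, hconst]
  rfl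

lemma S_le (f : Fin n → ℕ) (b t : ℕ) (ht : t ≤ n) (h : ∀ k, f k ≤ b) :
    S f t ≤ t * b := by
  calc S f t ≤ (Finset.univ.filter (fun k : Fin n => (k : ℕ) < t)).card • b :=
        Finset.sum_le_card_nsmul _ _ _ (fun k _ => h k)
    _ = t * b := by rw [filter_card t ht, smul_eq_mul]

lemma S_lower (f : Fin n → ℕ) (a t : ℕ) (ht : t ≤ n) (h : ∀ k, a ≤ f k) :
    t * a ≤ S f t := by
  calc t * a = (Finset.univ.filter (fun k : Fin n => (k : ℕ) < t)).card • a := by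
        rw [filter_card t ht, smul_eq_mul]
    _ ≤ S f t := Finset.card_nsmul_le_sum _ _ _ (fun k _ => h k)

lemma exists_block (f : Fin n → ℕ) {v : ℕ} (hv : v < S f n) :
    ∃ t, ∃ h : t < n, S f t ≤ v ∧ v < S f (t + 1) := by
  classical
  set P := fun t => S f t ≤ v with hP
  have h0 : P 0 := by simp [hP, S_zero]
  set t := Nat.findGreatest P n with htdef
  have hPt : P t := Nat.findGreatest_spec (Nat.zero_le n) h0
  have htn : t ≤ n := Nat.findGreatest_le n
  have htlt : t < n := by
    rcases eq_or_lt_of_le htn with h | h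
    · exfalso; rw [h] at hPt; exact absurd hPt (not_le.mpr hv)
    · exact h
  have hng : ¬ P (t + 1) := Nat.findGreatest_is_greatest (Nat.lt_succ_self t) htlt
  exact ⟨t, htlt, hPt, not_le.mp hng⟩

lemma card_ivl {m : ℕ} (s e : ℕ) (he : e ≤ m) :
    (Finset.univ.filter (fun j : Fin m => s ≤ (j : ℕ) ∧ (j : ℕ) < e)).card = e - s := by
  rw [← Nat.card_Ico s e]
  apply Finset.card_bij (fun (j : Fin m) _ => (j : ℕ))
  · intro a ha
    simp only [Finset.mem_filter, Finset.mem_univ, true_and] at ha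
    simp [Finset.mem_Ico, ha.1, ha.2]
  · intro a _ b _ hab
    exact Fin.val_injective hab
  · intro b hb
    simp only [Finset.mem_Ico] at hb
    exact ⟨⟨b, lt_of_lt_of_le hb.2 he⟩, by simp [hb.1, hb.2], rfl⟩

lemma S_upper_compl (f : Fin n → ℕ) (b t : ℕ) (ht : t ≤ n) (h : ∀ k, f k ≤ b) :
    S f n ≤ S f t + (n - t) * b := by
  have hsplit := Finset.sum_filter_add_sum_filter_not Finset.univ
    (fun k : Fin n => (k : ℕ) < t) f
  have hcard := Finset.card_filter_add_card_filter_not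
    (s := (Finset.univ : Finset (Fin n))) (p := fun k : Fin n => (k : ℕ) < t)
  rw [filter_card t ht, Finset.card_univ, Fintype.card_fin] at hcard
  have hconst : ∑ k ∈ Finset.univ.filter (fun k : Fin n => ¬ (k : ℕ) < t), f k
      ≤ (n - t) * b := by
    calc ∑ k ∈ Finset.univ.filter (fun k : Fin n => ¬ (k : ℕ) < t), f k
        ≤ (Finset.univ.filter (fun k : Fin n => ¬ (k : ℕ) < t)).card • b :=
          Finset.sum_le_card_nsmul _ _ _ (fun k _ => h k)
      _ = (n - t) * b := by rw [smul_eq_mul]; congr 1; omega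
  have hSt : S f n = ∑ k, f k := S_top f
  rw [hSt, ← hsplit]
  exact Nat.add_le_add_left hconst _

end Stmt17Aux

open Stmt17Aux in
theorem stmt17 {n m : ℕ} (hn : 0 < n) (ℓ : Fin n → ℕ) (hℓ : ∀ i, 1 ≤ ℓ i ∧ ℓ i ≤ m)
    (hsort : Monotone ℓ)
    (val : Fin n → Fin m → ℕ)
    (hval : ∀ i j, val i j = if (j : ℕ) < ℓ i then 1 else 0)
    (nf nc : ℕ) (h1 : nf + nc = n)
    (h2 : nf * (m / n) + nc * ((m + n - 1) / n) = m) :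
    (∃ A : Alloc n m,
      (∀ i, A.bundle i = Finset.univ.filter
        (fun j : Fin m => blockStart n m nf i ≤ (j : ℕ) ∧
          (j : ℕ) < blockStart n m nf i + blockSize n m nf i)) ∧
      NonWasteful val A ∧ EQ1 (util val) A) ↔
    (∃ A : Alloc n m, NonWasteful val A ∧ EQ1 (util val) A) := by
  constructor
  · rintro ⟨A, -, hNW, hEQ⟩
    exact ⟨A, hNW, hEQ⟩
  rintro ⟨B, hNW, hEQ⟩
  set q := m / n with hq
  set c := (m + n - 1) / n with hc
  have hqc : q ≤ c := Nat.div_le_div_right (by omega)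
  have hdm := Nat.div_add_mod m n
  have hmod := Nat.mod_lt m hn
  have hcq : c ≤ q + 1 := by
    have h' : n * q + m % n = m := by rw [hq]; exact hdm
    have hmn : m + n - 1 + 1 = m + n := Nat.sub_add_cancel (by omega)
    have : c < q + 2 := by
      rw [hc, Nat.div_lt_iff_lt_mul hn]
      nlinarith [hmod, h', hmn]
    omega
  have hnfn : nf ≤ n := by omega
  have hm0 : 0 < m := lt_of_lt_of_le (hℓ ⟨0, hn⟩).1 (hℓ ⟨0, hn⟩).2
  -- ownership: only the owner values each good
  have hown : ∀ i : Fin n, ∀ v ∈ B.bundle i, (v : ℕ) < ℓ i := by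
    intro i v hv
    obtain ⟨k, hk, hv1⟩ := hNW v
    have hki : k = i := by
      by_contra hne
      exact (Finset.disjoint_left.mp (B.disj k i hne) hk) hv
    subst hki
    rw [hval] at hv1
    by_contra hlt
    rw [if_neg hlt] at hv1
    exact absurd hv1 one_ne_zero.symm
  have hval1 : ∀ i : Fin n, ∀ v ∈ B.bundle i, val i v = 1 := by
    intro i v hv; rw [hval, if_pos (hown i v hv)]
  set C : Fin n → ℕ := fun i => (B.bundle i).card with hC
  have hutilB : ∀ i, util val i (B.bundle i) = C i := by
    intro i
    unfold util
    rw [Finset.sum_congr rfl (hval1 i)]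
    simp [hC]
  -- card bounds from EQ1
  have hEQcard : ∀ i k : Fin n, C k ≤ C i + 1 := by
    intro i k
    by_cases hne : (B.bundle k).Nonempty
    · obtain ⟨v, hv, hle⟩ := hEQ i k hne
      have hrw : util val k (B.bundle k \ {v}) + 1 = C k := by
        rw [Finset.sdiff_singleton_eq_erase]
        unfold util
        rw [← hval1 k v hv]
        rw [Finset.sum_erase_add _ _ hv]
        exact hutilB k
      rw [hutilB i] at hle
      omega
    · have : C k = 0 := Finset.card_eq_zero.mpr (Finset.not_nonempty_iff_eq_empty.mp hne)
      omega
  obtain ⟨k0, -, hk0⟩ := Finset.exists_min_image Finset.univ C ⟨⟨0, hn⟩, Finset.mem_univ _⟩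
  have hk0' : ∀ k, C k0 ≤ C k := fun k => hk0 k (Finset.mem_univ k)
  set a := C k0 with ha
  have haup : ∀ k, C k ≤ a + 1 := fun k => hEQcard k0 k
  -- total cards = m
  have hcov : Finset.univ.biUnion B.bundle = (Finset.univ : Finset (Fin m)) := by
    apply Finset.eq_univ_of_forall
    intro v
    obtain ⟨i, hi, -⟩ := hNW v
    exact Finset.mem_biUnion.mpr ⟨i, Finset.mem_univ i, hi⟩
  have hdisj' : ∀ i ∈ (Finset.univ : Finset (Fin n)), ∀ k ∈ Finset.univ, i ≠ k →
      Disjoint (B.bundle i) (B.bundle k) := fun i _ k _ h => B.disj i k h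
  have hsum : ∑ k, C k = m := by
    have := Finset.card_biUnion hdisj'
    rw [hcov, Finset.card_univ, Fintype.card_fin] at this
    exact this.symm
  -- a = q
  have haq : a = q := by
    have hup : n * a ≤ m := by
      have : (Finset.univ : Finset (Fin n)).card • a ≤ ∑ k, C k :=
        Finset.card_nsmul_le_sum _ _ _ (fun k _ => hk0' k)
      rw [Finset.card_univ, Fintype.card_fin, smul_eq_mul, hsum] at this
      exact this
    have hle1 : a ≤ q := by
      rw [hq, Nat.le_div_iff_mul_le hn, mul_comm]; exact hup
    have hge : q ≤ a := by
      by_contra hlt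
      have h3 : a + 1 ≤ q := by omega
      have h4 : n * (a + 1) ≤ n * q := Nat.mul_le_mul_left n h3
      have hsplit : ∑ k, C k = C k0 + ∑ k ∈ Finset.univ.erase k0, C k :=
        (Finset.add_sum_erase _ _ (Finset.mem_univ k0)).symm
      have hbound : ∑ k ∈ Finset.univ.erase k0, C k ≤ (n - 1) * (a + 1) := by
        calc ∑ k ∈ Finset.univ.erase k0, C k
            ≤ (Finset.univ.erase k0).card • (a + 1) :=
              Finset.sum_le_card_nsmul _ _ _ (fun k _ => haup k)
          _ = (n - 1) * (a + 1) := by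
              rw [Finset.card_erase_of_mem (Finset.mem_univ k0), Finset.card_univ,
                Fintype.card_fin, smul_eq_mul]
      have hnq : n * q ≤ m := by
        rw [hq, mul_comm]; exact Nat.div_mul_le_self m n
      have hX1 : a + 1 ≤ n * (a + 1) := Nat.le_mul_of_pos_left _ hn
      have h6 : (n - 1) * (a + 1) = n * (a + 1) - (a + 1) := by rw [Nat.sub_one_mul]
      omega
    omega
  -- prefix sums
  set T := Stmt17Aux.S (blockSize n m nf) with hT
  set SC := Stmt17Aux.S C with hSC
  have hbsz : ∀ k : Fin n, blockSize n m nf k = if (k : ℕ) < nf then q else c := fun k => rfl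
  have hbszq : ∀ k : Fin n, q ≤ blockSize n m nf k := by
    intro k; rw [hbsz]; split <;> omega
  have hbszc : ∀ k : Fin n, blockSize n m nf k ≤ c := by
    intro k; rw [hbsz]; split <;> omega
  have hTtop : T n = m := by
    have hs := S_suffix_const (blockSize n m nf) c nf hnfn
      (fun k hk => by rw [hbsz, if_neg (by omega)])
    have hp := S_const_prefix (blockSize n m nf) q nf hnfn
      (fun k hk => by rw [hbsz, if_pos hk])
    rw [hT, hs, hp]
    have : n - nf = nc := by omega
    rw [this]; exact h2
  have hSCtop : SC n = m := by rw [hSC, S_top]; exact hsum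
  have hbs : ∀ i : Fin n, blockStart n m nf i = T (i : ℕ) := by
    intro i
    rw [hT]
    unfold blockStart Stmt17Aux.S
    exact Finset.sum_congr (by ext k; simp only [Finset.mem_filter, Finset.mem_univ,
      true_and, Fin.lt_def]) (fun _ _ => rfl)
  have hbe : ∀ i : Fin n, blockStart n m nf i + blockSize n m nf i = T ((i : ℕ) + 1) := by
    intro i
    rw [hbs, hT, S_succ (blockSize n m nf) i.isLt]
  -- the key inequality
  have hkey : ∀ i : Fin n, T ((i : ℕ) + 1) ≤ ℓ i := by
    intro i
    set t := (i : ℕ) + 1 with htdef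
    have htn : t ≤ n := i.isLt
    have hSCl : SC t ≤ ℓ i := by
      have hsub : (Finset.univ.filter (fun k : Fin n => (k : ℕ) < t)).biUnion B.bundle
          ⊆ Finset.univ.filter (fun j : Fin m => (j : ℕ) < ℓ i) := by
        intro v hv
        obtain ⟨k, hk, hvk⟩ := Finset.mem_biUnion.mp hv
        have hkt : (k : ℕ) < t := by simpa using (Finset.mem_filter.mp hk).2
        have hlk : ℓ k ≤ ℓ i := hsort (by rw [Fin.le_def]; omega)
        have := hown k v hvk
        simp only [Finset.mem_filter, Finset.mem_univ, true_and]
        omega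
      have hcb := Finset.card_biUnion (fun x _ y _ h => B.disj x y h)
        (s := Finset.univ.filter (fun k : Fin n => (k : ℕ) < t)) (t := B.bundle)
      calc SC t = ((Finset.univ.filter (fun k : Fin n => (k : ℕ) < t)).biUnion
            B.bundle).card := by rw [hcb]; rfl
        _ ≤ (Finset.univ.filter (fun j : Fin m => (j : ℕ) < ℓ i)).card :=
            Finset.card_le_card hsub
        _ = ℓ i := by
            have : (Finset.univ.filter (fun j : Fin m => (j : ℕ) < ℓ i)).card = ℓ i :=
              filter_card (ℓ i) (hℓ i).2
            exact this
    have hTSC : T t ≤ SC t := by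
      rcases (show c = q ∨ c = q + 1 by omega) with hcc | hcc
      · have h3 : T t ≤ t * q := S_le _ q t htn (fun k => by rw [hbsz]; split <;> omega)
        have h4 : t * a ≤ SC t := S_lower C a t htn hk0'
        rw [haq] at h4
        omega
      · by_cases hcase : t ≤ nf
        · have h3 : T t = t * q := S_const_prefix _ q t htn
            (fun k hk => by rw [hbsz, if_pos (by omega)])
          have h4 : t * a ≤ SC t := S_lower C a t htn hk0'
          rw [haq] at h4
          omega
        · have h3 : T n = T t + (n - t) * c := S_suffix_const _ c t htn
            (fun k hk => by rw [hbsz, if_neg (by omega)])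
          have h4 : SC n ≤ SC t + (n - t) * (a + 1) :=
            S_upper_compl C (a + 1) t htn haup
          rw [hTtop] at h3
          rw [hSCtop] at h4
          rw [haq] at h4
          rw [hcc] at h3
          omega
    calc T t ≤ SC t := hTSC
      _ ≤ ℓ i := hSCl
  -- construct the candidate allocation
  set bF : Fin n → Finset (Fin m) := fun i => Finset.univ.filter
    (fun j : Fin m => blockStart n m nf i ≤ (j : ℕ) ∧
      (j : ℕ) < blockStart n m nf i + blockSize n m nf i) with hbF
  have hconn : ∀ i, IsIvl (bF i) := by
    intro i x y z hx hz hxy hyz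
    simp only [hbF, Finset.mem_filter, Finset.mem_univ, true_and] at hx hz ⊢
    rw [Fin.le_def] at hxy hyz
    omega
  have hdj : ∀ i k : Fin n, i ≠ k → Disjoint (bF i) (bF k) := by
    have key : ∀ i k : Fin n, i < k → Disjoint (bF i) (bF k) := by
      intro i k hik
      rw [Finset.disjoint_left]
      intro x hxi hxk
      simp only [hbF, Finset.mem_filter, Finset.mem_univ, true_and] at hxi hxk
      rw [hbe] at hxi
      rw [hbs] at hxk
      have : T ((i : ℕ) + 1) ≤ T (k : ℕ) := S_mono _ (by rw [Fin.lt_def] at hik; omega)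
      omega
    intro i k hik
    rcases lt_or_gt_of_ne hik with h | h
    · exact key i k h
    · exact (key k i h).symm
  have hmem : ∀ i : Fin n, ∀ x : Fin m,
      x ∈ bF i ↔ T (i : ℕ) ≤ (x : ℕ) ∧ (x : ℕ) < T ((i : ℕ) + 1) := by
    intro i x
    simp only [hbF, Finset.mem_filter, Finset.mem_univ, true_and]
    rw [hbe i, hbs i]
  have hNWA : NonWasteful val ⟨bF, hconn, hdj⟩ := by
    intro v
    have hv : (v : ℕ) < Stmt17Aux.S (blockSize n m nf) n := by rw [← hT, hTtop]; exact v.isLt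
    obtain ⟨t, htlt, hle, hlt⟩ := exists_block (blockSize n m nf) hv
    refine ⟨⟨t, htlt⟩, ?_, ?_⟩
    · rw [hmem]; exact ⟨hle, hlt⟩
    · rw [hval, if_pos]
      calc (v : ℕ) < T (t + 1) := hlt
        _ ≤ ℓ ⟨t, htlt⟩ := hkey ⟨t, htlt⟩
  have hvalA : ∀ i : Fin n, ∀ x ∈ bF i, val i x = 1 := by
    intro i x hx
    rw [hmem] at hx
    rw [hval, if_pos]
    have := hkey i
    omega
  have hcardA : ∀ i : Fin n, (bF i).card = blockSize n m nf i := by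
    intro i
    have hle : blockStart n m nf i + blockSize n m nf i ≤ m := by
      rw [hbe]
      calc T ((i : ℕ) + 1) ≤ T n := S_mono _ i.isLt
        _ = m := hTtop
    rw [hbF]
    simp only
    rw [card_ivl _ _ hle]
    omega
  have hutilA : ∀ i : Fin n, util val i (bF i) = blockSize n m nf i := by
    intro i
    unfold util
    rw [Finset.sum_congr rfl (hvalA i)]
    simp [hcardA i]
  refine ⟨⟨bF, hconn, hdj⟩, fun i => rfl, hNWA, ?_⟩
  intro i k hne
  obtain ⟨v, hv⟩ := hne
  refine ⟨v, hv, ?_⟩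
  show util val k (bF k \ {v}) ≤ util val i (bF i)
  have hrw : util val k (bF k \ {v}) + 1 = blockSize n m nf k := by
    rw [Finset.sdiff_singleton_eq_erase]
    unfold util
    rw [← hvalA k v hv, Finset.sum_erase_add _ _ hv]
    exact hutilA k
  rw [hutilA i]
  have h5 := hbsz i
  have h6 := hbsz k
  have : blockSize n m nf k ≤ blockSize n m nf i + 1 := by
    rw [h5, h6]; split <;> split <;> omega
  omega
end

section
/- For binary additive valuations and a fixed ordering σ, if an agent a_j is θ-unsafe (no σ-consistent connected allocation gives each of a_1,...,a_j utility ≥ θ+1 and each of a_{j+1},...,a_n utility ≥ θ), and a_{j-1} is θ-safe, then in the allocation produced by assigning minimal bundles worth θ+1 to a_1,...,a_{j-1} left to right, minimal bundles worth θ to a_n,...,a_{j+1} right to left, and the leftover goods to a_j, the utility of a_j is exactly θ. -/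
open Finset

/-- Agent `i` is θ-safe: some ordered connected (partial) allocation gives each of
`a_1,…,a_i` utility ≥ θ+1 and each of `a_{i+1},…,a_n` utility ≥ θ. -/
def Safe {n m : ℕ} (val : Fin n → Fin m → ℕ) (θ : ℕ) (i : Fin n) : Prop :=
  ∃ B : Alloc n m, Consistent (Equiv.refl (Fin n)) B ∧
    (∀ i', i' ≤ i → θ + 1 ≤ util val i' (B.bundle i')) ∧
    (∀ i', i < i' → θ ≤ util val i' (B.bundle i'))

theorem stmt18 {n m : ℕ} (val : Fin n → Fin m → ℕ) (hbin : ∀ i j, val i j ≤ 1)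
    (θ : ℕ) (j : Fin n)
    (hunsafe : ¬ Safe val θ j)
    (hpred : ∃ B : Alloc n m, Consistent (Equiv.refl (Fin n)) B ∧
      (∀ i, i < j → θ + 1 ≤ util val i (B.bundle i)) ∧
      (∀ i, j ≤ i → θ ≤ util val i (B.bundle i)))
    (A : Alloc n m)
    (hOrd : Consistent (Equiv.refl (Fin n)) A) (hComp : A.Complete)
    (hleft : ∀ i, i < j → θ + 1 ≤ util val i (A.bundle i))
    (hleftmin : ∀ i, i < j → ∀ v ∈ A.bundle i, (∀ w ∈ A.bundle i, w ≤ v) →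
      util val i (A.bundle i \ {v}) < θ + 1)
    (hright : ∀ i, j < i → θ ≤ util val i (A.bundle i))
    (hrightmin : ∀ i, j < i → ∀ v ∈ A.bundle i, (∀ w ∈ A.bundle i, v ≤ w) →
      util val i (A.bundle i \ {v}) < θ) :
    util val j (A.bundle j) = θ := by
  obtain ⟨B, hBc, hB1, hB2⟩ := hpred
  have hBc' : ∀ i k : Fin n, i < k → ∀ x ∈ B.bundle i, ∀ y ∈ B.bundle k, x < y := hBc
  have hOrd' : ∀ i k : Fin n, i < k → ∀ x ∈ A.bundle i, ∀ y ∈ A.bundle k, x < y := hOrd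
  have hmono : ∀ i (S T : Finset (Fin m)), S ⊆ T → util val i S ≤ util val i T :=
    fun i S T h => Finset.sum_le_sum_of_subset h
  -- Upper bound
  have hub : util val j (A.bundle j) ≤ θ := by
    by_contra h
    push_neg at h
    refine hunsafe ⟨A, hOrd, fun i' hi' => ?_, hright⟩
    rcases lt_or_eq_of_le hi' with h' | h'
    · exact hleft i' h'
    · subst h'; exact h
  -- Left claim: every good in A.bundle i (i < j) is ≤ some good of B.bundle i
  have claimL : ∀ N : ℕ, ∀ i : Fin n, i.val = N → i < j → ∀ g ∈ A.bundle i,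
      ∃ x ∈ B.bundle i, g ≤ x := by
    intro N
    induction N using Nat.strong_induction_on with
    | _ N IH =>
      intro i hN hij g hg
      by_contra hcon
      push_neg at hcon
      have hAne : (A.bundle i).Nonempty := ⟨g, hg⟩
      set v := (A.bundle i).max' hAne with hv
      have hvmem := (A.bundle i).max'_mem hAne
      have hmax : ∀ w ∈ A.bundle i, w ≤ v := fun w hw => Finset.le_max' _ _ hw
      have hlt := hleftmin i hij v hvmem hmax
      have hsub : B.bundle i ⊆ A.bundle i \ {v} := by
        intro x hx
        have hxg : x < g := hcon x hx
        obtain ⟨k, hk⟩ := hComp x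
        rcases lt_trichotomy k i with hki | hki | hki
        · obtain ⟨y, hy, hxy⟩ := IH k.val (by
            have : k.val < i.val := hki
            omega) k rfl (hki.trans hij) x hk
          exact absurd (hBc' k i hki y hy x hx) (not_lt.mpr hxy)
        · subst hki
          rw [Finset.mem_sdiff, Finset.mem_singleton]
          refine ⟨hk, fun hxv => ?_⟩
          rw [hxv] at hxg
          exact absurd (hmax g hg) (not_le.mpr hxg)
        · exact absurd (hOrd' i k hki g hg x hk) (not_lt.mpr hxg.le)
      have h1 : θ + 1 ≤ util val i (B.bundle i) := hB1 i hij
      have h2 := hmono i _ _ hsub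
      omega
  -- Right claim: every good in A.bundle i (j < i) is ≥ some good of B.bundle i
  have claimR : ∀ N : ℕ, ∀ i : Fin n, n - i.val = N → j < i → ∀ g ∈ A.bundle i,
      ∃ x ∈ B.bundle i, x ≤ g := by
    intro N
    induction N using Nat.strong_induction_on with
    | _ N IH =>
      intro i hN hij g hg
      by_contra hcon
      push_neg at hcon
      have hAne : (A.bundle i).Nonempty := ⟨g, hg⟩
      set v := (A.bundle i).min' hAne with hv
      have hvmem := (A.bundle i).min'_mem hAne
      have hmin : ∀ w ∈ A.bundle i, v ≤ w := fun w hw => Finset.min'_le _ _ hw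
      have hlt := hrightmin i hij v hvmem hmin
      have hsub : B.bundle i ⊆ A.bundle i \ {v} := by
        intro x hx
        have hgx : g < x := hcon x hx
        obtain ⟨k, hk⟩ := hComp x
        rcases lt_trichotomy k i with hki | hki | hki
        · exact absurd (hOrd' k i hki x hk g hg) (not_lt.mpr hgx.le)
        · subst hki
          rw [Finset.mem_sdiff, Finset.mem_singleton]
          refine ⟨hk, fun hxv => ?_⟩
          rw [hxv] at hgx
          exact absurd (hmin g hg) (not_le.mpr hgx)
        · obtain ⟨y, hy, hyx⟩ := IH (n - k.val) (by
            have h1 : i.val < k.val := hki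
            have h2 : k.val < n := k.isLt
            omega) k rfl (hij.trans hki) x hk
          exact absurd (hBc' i k hki x hx y hy) (not_lt.mpr hyx)
      have h1 : θ ≤ util val i (B.bundle i) := hB2 i hij.le
      have h2 := hmono i _ _ hsub
      omega
  -- Lower bound
  have hsubj : B.bundle j ⊆ A.bundle j := by
    intro x hx
    obtain ⟨k, hk⟩ := hComp x
    rcases lt_trichotomy k j with hkj | hkj | hkj
    · obtain ⟨y, hy, hxy⟩ := claimL k.val k rfl hkj x hk
      exact absurd (hBc' k j hkj y hy x hx) (not_lt.mpr hxy)
    · subst hkj; exact hk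
    · obtain ⟨y, hy, hyx⟩ := claimR (n - k.val) k rfl hkj x hk
      exact absurd (hBc' j k hkj x hx y hy) (not_lt.mpr hyx)
  have hlb : θ ≤ util val j (A.bundle j) := (hB2 j le_rfl).trans (hmono j _ _ hsubj)
  omega
end
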